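/- arXiv:2412.20388 — 6 statements merged into one kernel-verified Lean document; each statement's English description precedes it below -/
import Mathlib

section
/- Fix integers n ≥ 2 and X ≥ 3n (thinking of X as X(d) for a partition d of length n into positive parts), and suppose X ≥ n + 3. Then Σ_{n1=0}^{n-1} binomial(n-1, n1) · (n1)! · (X - n1 - 3)! / (X - 1)! ≤ 3/(2·(X-1)·(X-2)). -/
open Nat Finset

lemma bgw_aux (n m : ℕ) (h : 3 * n ≤ m + 6) :
    ∀ k, 3 ^ k * (n - 1).descFactorial k ≤ (m + 3).descFactorial k := by
  intro k
  induction k with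
  | zero => simp
  | succ k ih =>
    calc 3 ^ (k + 1) * (n - 1).descFactorial (k + 1)
        = (3 * (n - 1 - k)) * (3 ^ k * (n - 1).descFactorial k) := by
          rw [Nat.descFactorial_succ, pow_succ]; ring
      _ ≤ (m + 3 - k) * ((m + 3).descFactorial k) :=
          Nat.mul_le_mul (by omega) ih
      _ = (m + 3).descFactorial (k + 1) := (Nat.descFactorial_succ _ _).symm

/-- Estimate for the boundary terms in the DVV-type recursion for BGW numbers. -/
theorem bgw_boundary_term_estimate (n X : ℕ) (hn : 2 ≤ n) (hX : 3 * n ≤ X)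
    (hX' : n + 3 ≤ X) :
    ∑ n1 ∈ Finset.range n,
        (Nat.choose (n - 1) n1 : ℚ) * (n1 ! : ℚ) * ((X - n1 - 3)! : ℚ) / ((X - 1)! : ℚ)
      ≤ 3 / (2 * ((X : ℚ) - 1) * ((X : ℚ) - 2)) := by
  obtain ⟨m, rfl⟩ : ∃ m, X = m + 6 := ⟨X - 6, by omega⟩
  have hXQ : ((m + 6 : ℕ) : ℚ) = (m : ℚ) + 6 := by push_cast; ring
  set C : ℚ := 1 / (((m : ℚ) + 5) * ((m : ℚ) + 4)) with hC
  have hCpos : 0 < C := by positivity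
  have hterm : ∀ n1 ∈ Finset.range n,
      (Nat.choose (n - 1) n1 : ℚ) * (n1 ! : ℚ) * ((m + 6 - n1 - 3)! : ℚ) / ((m + 6 - 1)! : ℚ)
        ≤ (1 / 3 : ℚ) ^ n1 * C := by
    intro n1 hn1
    rw [Finset.mem_range] at hn1
    have hn1m : n1 ≤ m + 3 := by omega
    have e1 : m + 6 - 1 = m + 5 := by omega
    have e2 : m + 6 - n1 - 3 = m + 3 - n1 := by omega
    rw [e1, e2]
    -- key nat inequality
    have hnat : 3 ^ n1 * ((n - 1).choose n1 * n1 ! * (m + 3 - n1)!) ≤ (m + 3)! := by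
      have h1 : (n - 1).choose n1 * n1 ! = (n - 1).descFactorial n1 := by
        rw [Nat.descFactorial_eq_factorial_mul_choose]; ring
      calc 3 ^ n1 * ((n - 1).choose n1 * n1 ! * (m + 3 - n1)!)
          = (3 ^ n1 * (n - 1).descFactorial n1) * (m + 3 - n1)! := by rw [h1]; ring
        _ ≤ (m + 3).descFactorial n1 * (m + 3 - n1)! :=
            Nat.mul_le_mul_right _ (bgw_aux n m hX n1)
        _ = (m + 3)! := by
            rw [Nat.mul_comm]; exact Nat.factorial_mul_descFactorial hn1m
    have hnat2 : 3 ^ n1 * ((n - 1).choose n1 * n1 ! * (m + 3 - n1)!) * ((m + 5) * (m + 4))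
        ≤ (m + 5)! := by
      have hf : (m + 5)! = (m + 3)! * ((m + 5) * (m + 4)) := by
        show (m + 4 + 1)! = _
        rw [Nat.factorial_succ]
        show (m + 5) * (m + 3 + 1)! = _
        rw [Nat.factorial_succ]
        ring
      rw [hf]
      exact Nat.mul_le_mul_right _ hnat
    have key : (3 : ℚ) ^ n1 * ((Nat.choose (n - 1) n1 : ℚ) * (n1 ! : ℚ) * ((m + 3 - n1)! : ℚ))
        * (((m : ℚ) + 5) * ((m : ℚ) + 4)) ≤ ((m + 5)! : ℚ) := by
      exact_mod_cast hnat2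
    have hfp : (0 : ℚ) < ((m + 5)! : ℚ) := by exact_mod_cast Nat.factorial_pos (m + 5)
    have hdp : (0 : ℚ) < ((m : ℚ) + 5) * ((m : ℚ) + 4) := by positivity
    rw [hC, mul_one_div, div_le_div_iff₀ hfp hdp]
    have h3 : (0 : ℚ) < (3 : ℚ) ^ n1 := by positivity
    rw [div_pow, one_pow, div_mul_eq_mul_div, le_div_iff₀ h3]
    calc (Nat.choose (n - 1) n1 : ℚ) * (n1 ! : ℚ) * ((m + 3 - n1)! : ℚ)
          * (((m : ℚ) + 5) * ((m : ℚ) + 4)) * (3 : ℚ) ^ n1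
        = (3 : ℚ) ^ n1 * ((Nat.choose (n - 1) n1 : ℚ) * (n1 ! : ℚ) * ((m + 3 - n1)! : ℚ))
          * (((m : ℚ) + 5) * ((m : ℚ) + 4)) := by ring
      _ ≤ ((m + 5)! : ℚ) := key
      _ = 1 * ((m + 5)! : ℚ) := by ring
  have geom : ∑ n1 ∈ Finset.range n, (1 / 3 : ℚ) ^ n1 ≤ 3 / 2 := by
    rw [geom_sum_eq (by norm_num : (1 / 3 : ℚ) ≠ 1) n]
    have hp : (0 : ℚ) ≤ (1 / 3 : ℚ) ^ n := by positivity
    rw [div_le_iff_of_neg (by norm_num : (1 / 3 : ℚ) - 1 < 0)]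
    linarith
  calc ∑ n1 ∈ Finset.range n,
        (Nat.choose (n - 1) n1 : ℚ) * (n1 ! : ℚ) * ((m + 6 - n1 - 3)! : ℚ) / ((m + 6 - 1)! : ℚ)
      ≤ ∑ n1 ∈ Finset.range n, (1 / 3 : ℚ) ^ n1 * C := Finset.sum_le_sum hterm
    _ = (∑ n1 ∈ Finset.range n, (1 / 3 : ℚ) ^ n1) * C := by rw [Finset.sum_mul]
    _ ≤ (3 / 2) * C := mul_le_mul_of_nonneg_right geom hCpos.le
    _ = 3 / (2 * (((m + 6 : ℕ) : ℚ) - 1) * (((m + 6 : ℕ) : ℚ) - 2)) := by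
        rw [hXQ, hC]
        have h5 : ((m : ℚ) + 5) ≠ 0 := by positivity
        have h4 : ((m : ℚ) + 4) ≠ 0 := by positivity
        have h2 : ((m : ℚ) + 6) - 1 = (m : ℚ) + 5 := by ring
        have h3 : ((m : ℚ) + 6) - 2 = (m : ℚ) + 4 := by ring
        rw [h2, h3, mul_one_div, mul_assoc]
        rw [div_div]
end

section
/- Let C be the normalized BGW numbers, satisfying C(0) = 1/4, the DVV-type recursion, and the one-point formula C(g-1) = g·binomial(2g-1,g)^2/4^(2g-1) for g = m+1 (i.e. for C(m)). Then for every n ≥ 1 and every d = (d1,...,dn) ∈ (Z_{≥0})^n, C(d) ≥ C(|d|), where |d| = d1 + ... + dn. -/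
open Nat Finset

/-- `X(d) = Σ_j (2 d_j + 1)` for a multiset `d` of nonnegative integers. -/
def Xbgw (m : Multiset ℕ) : ℕ := (m.map fun j => 2 * j + 1).sum

lemma Xbgw_cons (a : ℕ) (s : Multiset ℕ) : Xbgw (a ::ₘ s) = 2 * a + 1 + Xbgw s := by
  simp [Xbgw]

lemma Xbgw_eq (m : Multiset ℕ) : Xbgw m = 2 * m.sum + Multiset.card m := by
  induction m using Multiset.induction with
  | empty => simp [Xbgw]
  | cons a s ih => simp [Xbgw_cons, ih]; ring

lemma Xbgw_erase {j : ℕ} {s : Multiset ℕ} (h : j ∈ s) :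
    Xbgw s = 2 * j + 1 + Xbgw (s.erase j) := by
  conv_lhs => rw [← Multiset.cons_erase h]
  rw [Xbgw_cons]

lemma Xbgw_add (s t : Multiset ℕ) : Xbgw (s + t) = Xbgw s + Xbgw t := by
  simp [Xbgw]

lemma Xbgw_le {I s : Multiset ℕ} (h : I ≤ s) : Xbgw I ≤ Xbgw s := by
  obtain ⟨u, rfl⟩ := Multiset.le_iff_exists_add.1 h
  rw [Xbgw_add]; omega

lemma Xbgw_pos {m : Multiset ℕ} (hm : m ≠ 0) : 1 ≤ Xbgw m := by
  obtain ⟨j, hj⟩ := Multiset.exists_mem_of_ne_zero hm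
  have := Xbgw_erase hj
  omega

lemma Xbgw_cast (s : Multiset ℕ) :
    (s.map fun j : ℕ => (2 * (j : ℚ) + 1)).sum = (Xbgw s : ℚ) := by
  induction s using Multiset.induction with
  | empty => simp [Xbgw]
  | cons a s ih =>
    rw [Multiset.map_cons, Multiset.sum_cons, ih, Xbgw_cons]
    push_cast; ring

lemma exists_min (m : Multiset ℕ) (hm : m ≠ 0) : ∃ d ∈ m, ∀ j ∈ m, d ≤ j := by
  induction m using Multiset.induction with
  | empty => simp at hm
  | cons a s ih =>
    rcases eq_or_ne s 0 with rfl | hs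
    · exact ⟨a, by simp⟩
    · obtain ⟨d, hd, hmin⟩ := ih hs
      rcases le_total a d with h | h
      · exact ⟨a, Multiset.mem_cons_self a s, by
          intro j hj
          rcases Multiset.mem_cons.1 hj with rfl | hj
          · exact le_refl _
          · exact h.trans (hmin j hj)⟩
      · exact ⟨d, Multiset.mem_cons_of_mem hd, by
          intro j hj
          rcases Multiset.mem_cons.1 hj with rfl | hj
          · exact h
          · exact hmin j hj⟩

lemma msum_ge_single {α : Type*} {t : Multiset α} {g : α → ℚ} {x : α}
    (h0 : ∀ z ∈ t, 0 ≤ g z) (hx : x ∈ t) : g x ≤ (t.map g).sum := by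
  obtain ⟨t', rfl⟩ := Multiset.exists_cons_of_mem hx
  rw [Multiset.map_cons, Multiset.sum_cons]
  have : 0 ≤ (t'.map g).sum := Multiset.sum_nonneg (by
    intro z hz
    obtain ⟨y, hy, rfl⟩ := Multiset.mem_map.1 hz
    exact h0 y (Multiset.mem_cons_of_mem hy))
  linarith

lemma msum_ge_pair {α : Type*} [DecidableEq α] {t : Multiset α} {g : α → ℚ} {x y : α}
    (h0 : ∀ z ∈ t, 0 ≤ g z) (hx : x ∈ t) (hy : y ∈ t) (hxy : x ≠ y) :
    g x + g y ≤ (t.map g).sum := by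
  obtain ⟨t', rfl⟩ := Multiset.exists_cons_of_mem hx
  have hy' : y ∈ t' := by
    rcases Multiset.mem_cons.1 hy with rfl | h
    · exact absurd rfl hxy
    · exact h
  rw [Multiset.map_cons, Multiset.sum_cons]
  have := msum_ge_single (g := g) (fun z hz => h0 z (Multiset.mem_cons_of_mem hz)) hy'
  linarith

lemma choose_rel (k : ℕ) :
    (k+2) * ((k+1) * Nat.choose (2*k+3) (k+2)) = (2*k+3) * ((2*k+2) * Nat.choose (2*k+1) (k+1)) := by
  have h1 : (2*k+3) * Nat.choose (2*k+2) (k+1) = Nat.choose (2*k+3) (k+2) * (k+2) := by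
    have := Nat.add_one_mul_choose_eq (2*k+2) (k+1)
    simpa [Nat.succ_eq_add_one, show 2*k+2+1 = 2*k+3 by ring] using this
  have h2 : (2*k+2) * Nat.choose (2*k+1) k = Nat.choose (2*k+2) (k+1) * (k+1) := by
    have := Nat.add_one_mul_choose_eq (2*k+1) k
    simpa [Nat.succ_eq_add_one, show 2*k+1+1 = 2*k+2 by ring] using this
  have h3 : Nat.choose (2*k+1) k = Nat.choose (2*k+1) (k+1) := by
    rw [← Nat.choose_symm (by omega)]
    congr 1
    omega
  calc (k+2) * ((k+1) * Nat.choose (2*k+3) (k+2))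
      = (Nat.choose (2*k+3) (k+2) * (k+2)) * (k+1) := by ring
    _ = ((2*k+3) * Nat.choose (2*k+2) (k+1)) * (k+1) := by rw [h1]
    _ = (2*k+3) * (Nat.choose (2*k+2) (k+1) * (k+1)) := by ring
    _ = (2*k+3) * ((2*k+2) * Nat.choose (2*k+1) k) := by rw [h2]
    _ = (2*k+3) * ((2*k+2) * Nat.choose (2*k+1) (k+1)) := by rw [h3]

lemma onept_ratio (C : Multiset ℕ → ℚ)
    (hone : ∀ k : ℕ,
      C {k} = ((k : ℚ) + 1) * (Nat.choose (2 * k + 1) (k + 1) : ℚ) ^ 2 / 4 ^ (2 * k + 1))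
    (k : ℕ) :
    C {k} * (2*(k:ℚ)+3)^2 = 4*((k:ℚ)+1)*((k:ℚ)+2) * C {k+1} := by
  have hq : ((k:ℚ)+2) * (((k:ℚ)+1) * (Nat.choose (2*k+3) (k+2) : ℚ))
      = (2*(k:ℚ)+3) * ((2*(k:ℚ)+2) * (Nat.choose (2*k+1) (k+1) : ℚ)) := by
    exact_mod_cast congrArg (fun n : ℕ => (n : ℚ)) (choose_rel k)
  have hk1 : ((k:ℚ)+1) ≠ 0 := by positivity
  have hk2 : ((k:ℚ)+2) ≠ 0 := by positivity
  have hq2 : (Nat.choose (2*k+3) (k+2) : ℚ)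
      = (2*(k:ℚ)+3) * ((2*(k:ℚ)+2) * (Nat.choose (2*k+1) (k+1) : ℚ)) / (((k:ℚ)+2)*((k:ℚ)+1)) := by
    rw [eq_div_iff (mul_ne_zero hk2 hk1)]
    linear_combination hq
  rw [hone k, hone (k+1)]
  have e1 : 2*(k+1)+1 = 2*k+3 := by ring
  have e2 : (k+1)+1 = k+2 := by ring
  rw [e1, e2, hq2]
  have h4 : (4:ℚ) ^ (2*k+3) = 4^(2*k+1) * 16 := by
    rw [show 2*k+3 = 2*k+1+2 by ring, pow_add]; norm_num
  push_cast
  rw [h4]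
  have h40 : (4:ℚ)^(2*k+1) ≠ 0 := by positivity
  field_simp
  ring

lemma fact_ratio (X : ℕ) (hX : 3 ≤ X) :
    ((X-3)! : ℚ) / ((X-1)! : ℚ) = 1/(((X:ℚ)-1)*((X:ℚ)-2)) := by
  have e : (X-1)! = (X-1) * ((X-2) * (X-3)!) := by
    rw [show X-1 = (X-2)+1 by omega, Nat.factorial_succ, show X-2 = (X-3)+1 by omega,
      Nat.factorial_succ]
  have c1 : ((X-1 : ℕ) : ℚ) = (X:ℚ) - 1 := by
    push_cast [Nat.cast_sub (by omega : 1 ≤ X)]; ring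
  have c2 : ((X-2 : ℕ) : ℚ) = (X:ℚ) - 2 := by
    push_cast [Nat.cast_sub (by omega : 2 ≤ X)]; ring
  have hf : ((X-3)! : ℚ) ≠ 0 := by exact_mod_cast (Nat.factorial_pos _).ne'
  have h1 : (X:ℚ) - 1 ≠ 0 := by
    have : (3:ℚ) ≤ (X:ℚ) := by exact_mod_cast hX
    linarith
  have h2 : (X:ℚ) - 2 ≠ 0 := by
    have : (3:ℚ) ≤ (X:ℚ) := by exact_mod_cast hX
    linarith
  rw [e]
  push_cast
  rw [c1, c2]
  field_simp

lemma arith_final (x g dq Cg : ℚ) (hx : 6 ≤ x) (hg : 0 ≤ g)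
    (hkey : dq*(x-2) ≤ (g+1)*(g+2)) (hC : 0 < Cg) :
    Cg ≤ (x - (2*dq+1))/(x-1) * Cg
      + dq * (2/(x-1) * (4*(g+1)*(g+2)/(2*g+3)^2 * Cg))
      + 2 * (1/((x-1)*(x-2)) * (1/4 * (4*(g+1)*(g+2)/(2*g+3)^2 * Cg))) := by
  have h1 : (0:ℚ) < x - 1 := by linarith
  have h2 : (0:ℚ) < x - 2 := by linarith
  have h3 : (0:ℚ) < (2*g+3)^2 := by positivity
  rw [← sub_nonneg]
  have expand : (x - (2*dq+1))/(x-1) * Cg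
      + dq * (2/(x-1) * (4*(g+1)*(g+2)/(2*g+3)^2 * Cg))
      + 2 * (1/((x-1)*(x-2)) * (1/4 * (4*(g+1)*(g+2)/(2*g+3)^2 * Cg))) - Cg
      = (2*((g+1)*(g+2)*Cg) - 2*(dq*(x-2)*Cg)) / ((x-1)*(x-2)*(2*g+3)^2) := by
    field_simp
    ring
  rw [expand]
  apply div_nonneg
  · have := mul_le_mul_of_nonneg_right hkey hC.le
    linarith
  · positivity

/-- The normalized BGW numbers, characterized by the initial value, the DVV-type
recursion and the one-point formula, satisfy `C(d) ≥ C(|d|)`. -/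
theorem bgw_normalized_lower_bound (C : Multiset ℕ → ℚ)
    (hbase : C {0} = 1 / 4)
    (hrec : ∀ (d : ℕ) (s : Multiset ℕ), d ::ₘ s ≠ {0} →
      C (d ::ₘ s) =
        (s.map fun (j : ℕ) =>
            (2 * (j : ℚ) + 1) / ((Xbgw (d ::ₘ s) : ℚ) - 1) * C ((j + d) ::ₘ s.erase j)).sum
        + ∑ a ∈ Finset.range d,
            (2 / ((Xbgw (d ::ₘ s) : ℚ) - 1) * C (a ::ₘ (d - 1 - a) ::ₘ s)
              + ((s.powerset).map fun I =>
                  (((Xbgw (a ::ₘ I) - 1)! : ℚ) * ((Xbgw ((d - 1 - a) ::ₘ (s - I)) - 1)! : ℚ)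
                      / ((Xbgw (d ::ₘ s) - 1)! : ℚ))
                    * C (a ::ₘ I) * C ((d - 1 - a) ::ₘ (s - I))).sum))
    (hone : ∀ k : ℕ,
      C {k} = ((k : ℚ) + 1) * (Nat.choose (2 * k + 1) (k + 1) : ℚ) ^ 2 / 4 ^ (2 * k + 1)) :
    ∀ m : Multiset ℕ, m ≠ 0 → C {m.sum} ≤ C m := by
  have hpos1 : ∀ k : ℕ, 0 < C {k} := by
    intro k
    rw [hone k]
    have h1 : 0 < (Nat.choose (2 * k + 1) (k + 1) : ℚ) := by
      exact_mod_cast Nat.choose_pos (by omega)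
    positivity
  suffices H : ∀ N : ℕ, ∀ m : Multiset ℕ, m ≠ 0 → Xbgw m ≤ N → C {m.sum} ≤ C m by
    intro m hm; exact H (Xbgw m) m hm le_rfl
  intro N
  induction N with
  | zero =>
    intro m hm hX
    have := Xbgw_pos hm
    omega
  | succ N ih =>
    intro m hm hX
    have hposIH : ∀ t : Multiset ℕ, t ≠ 0 → Xbgw t ≤ N → 0 < C t :=
      fun t ht hXt => lt_of_lt_of_le (hpos1 t.sum) (ih t ht hXt)
    obtain ⟨d, hdm, hmin⟩ := exists_min m hm
    obtain ⟨s, rfl⟩ := Multiset.exists_cons_of_mem hdm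
    have hdle : ∀ j ∈ s, d ≤ j := fun j hj => hmin j (Multiset.mem_cons_of_mem hj)
    rcases eq_or_ne s 0 with rfl | hs0
    · -- singleton case
      simp only [Multiset.cons_zero, Multiset.sum_singleton]
      exact le_refl _
    rcases Nat.eq_zero_or_pos d with rfl | hd1
    · -- string equation case
      have hxs1 : 1 ≤ Xbgw s := Xbgw_pos hs0
      have hne : (0:ℕ) ::ₘ s ≠ {0} := by
        intro h
        have hc := congrArg Multiset.card h
        simp at hc
        exact hs0 hc
      have hrec0 := hrec 0 s hne
      rw [Finset.range_zero, Finset.sum_empty, add_zero] at hrec0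
      have hXs : ((Xbgw ((0:ℕ) ::ₘ s) : ℚ) - 1) = (Xbgw s : ℚ) := by
        rw [Xbgw_cons]; push_cast; ring
      have hmap : (s.map fun j : ℕ =>
            (2 * (j:ℚ) + 1) / ((Xbgw ((0:ℕ) ::ₘ s) : ℚ) - 1) * C ((j + 0) ::ₘ s.erase j)).sum
          = (s.map fun j : ℕ => (2 * (j:ℚ) + 1) * ((Xbgw s : ℚ)⁻¹ * C s)).sum := by
        congr 1
        apply Multiset.map_congr rfl
        intro j hj
        rw [hXs, Nat.add_zero, Multiset.cons_erase hj, div_eq_mul_inv]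
        ring
      have hxsne : (Xbgw s : ℚ) ≠ 0 := by
        have : (1:ℚ) ≤ (Xbgw s : ℚ) := by exact_mod_cast hxs1
        linarith
      have hCm : C ((0:ℕ) ::ₘ s) = C s := by
        rw [hrec0, hmap, Multiset.sum_map_mul_right, Xbgw_cast, ← mul_assoc,
          mul_inv_cancel₀ hxsne, one_mul]
      have hXsle : Xbgw s ≤ N := by
        rw [Xbgw_cons] at hX; omega
      rw [hCm, Multiset.sum_cons, Nat.zero_add]
      exact ih s hs0 hXsle

    · -- main case : d ≥ 1, s ≠ 0
      have hXc : Xbgw (d ::ₘ s) = 2*d+1 + Xbgw s := Xbgw_cons d s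
      obtain ⟨j0, hj0⟩ := Multiset.exists_mem_of_ne_zero hs0
      have hj0d : d ≤ j0 := hdle j0 hj0
      have hxs3 : 3 ≤ Xbgw s := by
        have := Xbgw_erase hj0
        omega
      have hX6 : 6 ≤ Xbgw (d ::ₘ s) := by omega
      have hXN : Xbgw (d ::ₘ s) ≤ N + 1 := hX
      have hx6 : (6:ℚ) ≤ ((Xbgw (d ::ₘ s) : ℚ)) := by exact_mod_cast hX6
      have hx1 : (0:ℚ) < ((Xbgw (d ::ₘ s) : ℚ)) - 1 := by linarith
      have hx2 : (0:ℚ) < ((Xbgw (d ::ₘ s) : ℚ)) - 2 := by linarith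
      set G : ℕ := d - 1 + s.sum with hGdef
      have hsum : (d ::ₘ s).sum = G + 1 := by rw [Multiset.sum_cons]; omega
      have hcard1 : 1 ≤ Multiset.card s := by
        have := Multiset.card_pos.2 hs0
        omega
      have hdn : d * (Multiset.card s + 1) ≤ G + 1 := by
        have h := Multiset.card_nsmul_le_sum hmin
        rw [Multiset.card_cons, smul_eq_mul, hsum, mul_comm] at h
        exact h
      have hkeyN : d * (Xbgw (d ::ₘ s) - 2) ≤ (G+1) * (G+2) := by
        have hXeq : Xbgw (d ::ₘ s) = 2 * (G+1) + (Multiset.card s + 1) := by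
          rw [Xbgw_eq, hsum, Multiset.card_cons]
        have h2d : 2 * d ≤ G + 1 := by nlinarith [hdn, hcard1]
        have hsub : Xbgw (d ::ₘ s) - 2 = 2*G + (Multiset.card s + 1) := by omega
        rw [hsub]
        nlinarith [hdn, h2d, hcard1]
      have hkeyQ : (d:ℚ) * (((Xbgw (d ::ₘ s):ℚ)) - 2) ≤ ((G:ℚ)+1)*((G:ℚ)+2) := by
        calc (d:ℚ) * (((Xbgw (d ::ₘ s):ℚ)) - 2)
            = ((d * (Xbgw (d ::ₘ s) - 2) : ℕ) : ℚ) := by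
              rw [Nat.cast_mul, Nat.cast_sub (show 2 ≤ Xbgw (d ::ₘ s) by omega)]
              norm_num
          _ ≤ (((G+1)*(G+2) : ℕ) : ℚ) := by exact_mod_cast hkeyN
          _ = ((G:ℚ)+1)*((G:ℚ)+2) := by push_cast; ring
      have hCG : C {G} = 4*((G:ℚ)+1)*((G:ℚ)+2)/(2*(G:ℚ)+3)^2 * C {G+1} := by
        have hr := onept_ratio C hone G
        have h3 : ((2*(G:ℚ)+3))^2 ≠ 0 := by positivity
        field_simp
        linear_combination hr
      have hne : d ::ₘ s ≠ {0} := by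
        intro h
        have hmem : d ∈ ({0} : Multiset ℕ) := h ▸ Multiset.mem_cons_self d s
        rw [Multiset.mem_singleton] at hmem
        omega
      have hrecm := hrec d s hne
      have hposC : ∀ (b : ℕ) (t : Multiset ℕ), Xbgw (b ::ₘ t) ≤ N → 0 < C (b ::ₘ t) :=
        fun b t h => hposIH _ (Multiset.cons_ne_zero) h
      -- lower bound for the linear (A) sum
      have hA : (Xbgw s : ℚ)/(((Xbgw (d ::ₘ s):ℚ)) - 1) * C {G+1}
          ≤ (s.map fun j : ℕ =>
              (2 * (j:ℚ) + 1) / ((Xbgw (d ::ₘ s) : ℚ) - 1) * C ((j + d) ::ₘ s.erase j)).sum := by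
        have hstep : ∀ j ∈ s,
            (2 * (j:ℚ) + 1) * ((((Xbgw (d ::ₘ s):ℚ)) - 1)⁻¹ * C {G+1})
            ≤ (2 * (j:ℚ) + 1) / ((Xbgw (d ::ₘ s) : ℚ) - 1) * C ((j + d) ::ₘ s.erase j) := by
          intro j hj
          have he := Xbgw_erase hj
          have hX' : Xbgw ((j+d) ::ₘ s.erase j) ≤ N := by
            rw [Xbgw_cons]; omega
          have h2 : s.sum = j + (s.erase j).sum := by
            conv_lhs => rw [← Multiset.cons_erase hj]
            rw [Multiset.sum_cons]
          have hsum' : ((j+d) ::ₘ s.erase j).sum = G + 1 := by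
            rw [Multiset.sum_cons]; omega
          have hC' : C {G+1} ≤ C ((j+d) ::ₘ s.erase j) := by
            have := ih _ (Multiset.cons_ne_zero) hX'
            rwa [hsum'] at this
          have hcoef : 0 ≤ (2 * (j:ℚ) + 1) / ((Xbgw (d ::ₘ s) : ℚ) - 1) := by
            apply div_nonneg (by positivity) (by linarith)
          calc (2 * (j:ℚ) + 1) * ((((Xbgw (d ::ₘ s):ℚ)) - 1)⁻¹ * C {G+1})
              = (2 * (j:ℚ) + 1) / ((Xbgw (d ::ₘ s) : ℚ) - 1) * C {G+1} := by
                rw [div_eq_mul_inv]; ring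
            _ ≤ _ := mul_le_mul_of_nonneg_left hC' hcoef
        have h := Multiset.sum_map_le_sum_map _ _ hstep
        rw [Multiset.sum_map_mul_right, Xbgw_cast] at h
        calc (Xbgw s : ℚ)/(((Xbgw (d ::ₘ s):ℚ)) - 1) * C {G+1}
            = (Xbgw s : ℚ) * ((((Xbgw (d ::ₘ s):ℚ)) - 1)⁻¹ * C {G+1}) := by
              rw [div_eq_mul_inv]; ring
          _ ≤ _ := h
      -- facts about C ((d-1) ::ₘ s) and the factorial ratio
      have hXds : Xbgw ((d-1) ::ₘ s) = Xbgw (d ::ₘ s) - 2 := by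
        rw [Xbgw_cons]; omega
      have hCds : C {G} ≤ C ((d-1) ::ₘ s) := by
        have hsums : ((d-1) ::ₘ s).sum = G := by rw [Multiset.sum_cons]
        have hXle : Xbgw ((d-1) ::ₘ s) ≤ N := by omega
        have := ih ((d-1) ::ₘ s) (Multiset.cons_ne_zero) hXle
        rwa [hsums] at this
      have hratX : (((Xbgw (d ::ₘ s) - 3)! : ℕ) : ℚ) / (((Xbgw (d ::ₘ s) - 1)! : ℕ) : ℚ)
          = 1/((((Xbgw (d ::ₘ s):ℚ)) - 1)*(((Xbgw (d ::ₘ s):ℚ)) - 2)) :=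
        fact_ratio _ (by omega)
      set eps : ℚ := 1/((((Xbgw (d ::ₘ s):ℚ)) - 1)*(((Xbgw (d ::ₘ s):ℚ)) - 2)) * (1/4 * C {G})
        with heps
      have heps_le : eps ≤ 1/((((Xbgw (d ::ₘ s):ℚ)) - 1)*(((Xbgw (d ::ₘ s):ℚ)) - 2))
          * (1/4 * C ((d-1) ::ₘ s)) := by
        rw [heps]
        have hpos : (0:ℚ) ≤ 1/((((Xbgw (d ::ₘ s):ℚ)) - 1)*(((Xbgw (d ::ₘ s):ℚ)) - 2)) :=
          le_of_lt (div_pos one_pos (mul_pos hx1 hx2))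
        apply mul_le_mul_of_nonneg_left _ hpos
        linarith [hCds]
      have hsne : (0 : Multiset ℕ) ≠ s := fun h => hs0 h.symm
      have h0mem : (0 : Multiset ℕ) ∈ s.powerset := Multiset.mem_powerset.2 _root_.zero_le
      have hsmem : s ∈ s.powerset := Multiset.mem_powerset.2 le_rfl
      -- per-term lower bound for the B sum
      have hB : ∀ a ∈ Finset.range d,
          2 / ((Xbgw (d ::ₘ s) : ℚ) - 1) * C {G}
            + ((if a = 0 then eps else 0) + (if a = d-1 then eps else 0))
          ≤ 2 / ((Xbgw (d ::ₘ s) : ℚ) - 1) * C (a ::ₘ (d - 1 - a) ::ₘ s)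
            + ((s.powerset).map fun I =>
                (((Xbgw (a ::ₘ I) - 1)! : ℚ) * ((Xbgw ((d - 1 - a) ::ₘ (s - I)) - 1)! : ℚ)
                    / ((Xbgw (d ::ₘ s) - 1)! : ℚ))
                  * C (a ::ₘ I) * C ((d - 1 - a) ::ₘ (s - I))).sum := by
        intro a ha
        rw [Finset.mem_range] at ha
        have hlin : C {G} ≤ C (a ::ₘ (d-1-a) ::ₘ s) := by
          have hXa : Xbgw (a ::ₘ (d-1-a) ::ₘ s) ≤ N := by
            rw [Xbgw_cons, Xbgw_cons]; omega
          have hsum' : (a ::ₘ (d-1-a) ::ₘ s).sum = G := by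
            rw [Multiset.sum_cons, Multiset.sum_cons]; omega
          have := ih _ (Multiset.cons_ne_zero) hXa
          rwa [hsum'] at this
        have hlin2 : 2 / ((Xbgw (d ::ₘ s) : ℚ) - 1) * C {G}
            ≤ 2 / ((Xbgw (d ::ₘ s) : ℚ) - 1) * C (a ::ₘ (d-1-a) ::ₘ s) :=
          mul_le_mul_of_nonneg_left hlin (by positivity)
        have hnn : ∀ I ∈ s.powerset, (0:ℚ) ≤
            (((Xbgw (a ::ₘ I) - 1)! : ℚ) * ((Xbgw ((d - 1 - a) ::ₘ (s - I)) - 1)! : ℚ)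
                / ((Xbgw (d ::ₘ s) - 1)! : ℚ))
              * C (a ::ₘ I) * C ((d - 1 - a) ::ₘ (s - I)) := by
          intro I hI
          have hIs : I ≤ s := Multiset.mem_powerset.1 hI
          have hXI : Xbgw I ≤ Xbgw s := Xbgw_le hIs
          have hXsI : Xbgw (s - I) ≤ Xbgw s := Xbgw_le tsub_le_self
          have hC1 : 0 < C (a ::ₘ I) := hposC a I (by rw [Xbgw_cons]; omega)
          have hC2 : 0 < C ((d-1-a) ::ₘ (s - I)) := hposC _ _ (by rw [Xbgw_cons]; omega)
          have hfact : (0:ℚ) ≤ ((Xbgw (a ::ₘ I) - 1)! : ℚ)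
              * ((Xbgw ((d - 1 - a) ::ₘ (s - I)) - 1)! : ℚ) / ((Xbgw (d ::ₘ s) - 1)! : ℚ) := by
            positivity
          exact mul_nonneg (mul_nonneg hfact hC1.le) hC2.le
        have hquad : (if a = 0 then eps else 0) + (if a = d-1 then eps else 0)
            ≤ ((s.powerset).map fun I =>
                (((Xbgw (a ::ₘ I) - 1)! : ℚ) * ((Xbgw ((d - 1 - a) ::ₘ (s - I)) - 1)! : ℚ)
                    / ((Xbgw (d ::ₘ s) - 1)! : ℚ))
                  * C (a ::ₘ I) * C ((d - 1 - a) ::ₘ (s - I))).sum := by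
          by_cases h0 : a = 0
          · subst h0
            have hval0 : (((Xbgw ((0:ℕ) ::ₘ (0:Multiset ℕ)) - 1)! : ℚ)
                  * ((Xbgw ((d - 1 - 0) ::ₘ (s - 0)) - 1)! : ℚ)
                    / ((Xbgw (d ::ₘ s) - 1)! : ℚ))
                * C ((0:ℕ) ::ₘ (0:Multiset ℕ)) * C ((d - 1 - 0) ::ₘ (s - 0))
                = 1/((((Xbgw (d ::ₘ s):ℚ)) - 1)*(((Xbgw (d ::ₘ s):ℚ)) - 2))
                  * (1/4 * C ((d-1) ::ₘ s)) := by
              rw [Multiset.sub_zero, Nat.sub_zero, Multiset.cons_zero]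
              have h01 : Xbgw {0} = 1 := by simp [Xbgw]
              have h3 : Xbgw ((d-1) ::ₘ s) - 1 = Xbgw (d ::ₘ s) - 3 := by omega
              rw [h01, h3, hbase]
              rw [show (1:ℕ) - 1 = 0 from rfl, Nat.factorial_zero, Nat.cast_one, one_mul, hratX]
              ring
            have hext0 : eps ≤ (((Xbgw ((0:ℕ) ::ₘ (0:Multiset ℕ)) - 1)! : ℚ)
                  * ((Xbgw ((d - 1 - 0) ::ₘ (s - 0)) - 1)! : ℚ)
                    / ((Xbgw (d ::ₘ s) - 1)! : ℚ))
                * C ((0:ℕ) ::ₘ (0:Multiset ℕ)) * C ((d - 1 - 0) ::ₘ (s - 0)) :=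
              le_trans heps_le (le_of_eq hval0.symm)
            by_cases hd' : (0:ℕ) = d-1
            · -- d = 1 : extract both the I = ∅ and I = s terms
              have hvalS : (((Xbgw ((0:ℕ) ::ₘ s) - 1)! : ℚ)
                    * ((Xbgw ((d - 1 - 0) ::ₘ (s - s)) - 1)! : ℚ)
                      / ((Xbgw (d ::ₘ s) - 1)! : ℚ))
                  * C ((0:ℕ) ::ₘ s) * C ((d - 1 - 0) ::ₘ (s - s))
                  = 1/((((Xbgw (d ::ₘ s):ℚ)) - 1)*(((Xbgw (d ::ₘ s):ℚ)) - 2))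
                    * (1/4 * C ((d-1) ::ₘ s)) := by
                have hd1' : d = 1 := by omega
                subst hd1'
                rw [Nat.sub_zero, Nat.sub_self, tsub_self, Multiset.cons_zero]
                have h01 : Xbgw {0} = 1 := by simp [Xbgw]
                have h3 : Xbgw ((0:ℕ) ::ₘ s) - 1 = Xbgw ((1:ℕ) ::ₘ s) - 3 := by
                  rw [Xbgw_cons 0 s, Xbgw_cons 1 s]
                  omega
                rw [h01, h3, hbase]
                rw [show (1:ℕ) - 1 = 0 from rfl, Nat.factorial_zero, Nat.cast_one, mul_one, hratX]
                ring
              have hextS : eps ≤ (((Xbgw ((0:ℕ) ::ₘ s) - 1)! : ℚ)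
                    * ((Xbgw ((d - 1 - 0) ::ₘ (s - s)) - 1)! : ℚ)
                      / ((Xbgw (d ::ₘ s) - 1)! : ℚ))
                  * C ((0:ℕ) ::ₘ s) * C ((d - 1 - 0) ::ₘ (s - s)) :=
                le_trans heps_le (le_of_eq hvalS.symm)
              rw [if_pos rfl, if_pos hd']
              exact le_trans (add_le_add hext0 hextS) (msum_ge_pair hnn h0mem hsmem hsne)
            · rw [if_pos rfl, if_neg hd', add_zero]
              exact le_trans hext0 (msum_ge_single hnn h0mem)
          · by_cases hd' : a = d-1
            · subst hd'
              have hvalS : (((Xbgw ((d-1) ::ₘ s) - 1)! : ℚ)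
                    * ((Xbgw ((d - 1 - (d-1)) ::ₘ (s - s)) - 1)! : ℚ)
                      / ((Xbgw (d ::ₘ s) - 1)! : ℚ))
                  * C ((d-1) ::ₘ s) * C ((d - 1 - (d-1)) ::ₘ (s - s))
                  = 1/((((Xbgw (d ::ₘ s):ℚ)) - 1)*(((Xbgw (d ::ₘ s):ℚ)) - 2))
                    * (1/4 * C ((d-1) ::ₘ s)) := by
                rw [Nat.sub_self, tsub_self, Multiset.cons_zero]
                have h01 : Xbgw {0} = 1 := by simp [Xbgw]
                have h3 : Xbgw ((d-1) ::ₘ s) - 1 = Xbgw (d ::ₘ s) - 3 := by omega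
                rw [h01, h3, hbase]
                rw [show (1:ℕ) - 1 = 0 from rfl, Nat.factorial_zero, Nat.cast_one, mul_one, hratX]
                ring
              have hextS : eps ≤ (((Xbgw ((d-1) ::ₘ s) - 1)! : ℚ)
                    * ((Xbgw ((d - 1 - (d-1)) ::ₘ (s - s)) - 1)! : ℚ)
                      / ((Xbgw (d ::ₘ s) - 1)! : ℚ))
                  * C ((d-1) ::ₘ s) * C ((d - 1 - (d-1)) ::ₘ (s - s)) :=
                le_trans heps_le (le_of_eq hvalS.symm)
              rw [if_neg h0, if_pos rfl, zero_add]
              exact le_trans hextS (msum_ge_single hnn hsmem)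
            · rw [if_neg h0, if_neg hd', add_zero]
              apply Multiset.sum_nonneg
              intro z hz
              obtain ⟨I, hI, rfl⟩ := Multiset.mem_map.1 hz
              exact hnn I hI
        linarith [hlin2, hquad]
      -- summing the B bound
      have hBsum : (d:ℚ) * (2 / ((Xbgw (d ::ₘ s) : ℚ) - 1) * C {G}) + (eps + eps)
          ≤ ∑ a ∈ Finset.range d,
            (2 / ((Xbgw (d ::ₘ s) : ℚ) - 1) * C (a ::ₘ (d - 1 - a) ::ₘ s)
              + ((s.powerset).map fun I =>
                  (((Xbgw (a ::ₘ I) - 1)! : ℚ) * ((Xbgw ((d - 1 - a) ::ₘ (s - I)) - 1)! : ℚ)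
                      / ((Xbgw (d ::ₘ s) - 1)! : ℚ))
                    * C (a ::ₘ I) * C ((d - 1 - a) ::ₘ (s - I))).sum) := by
        have h1 := Finset.sum_le_sum hB
        have h2 : ∑ a ∈ Finset.range d,
              (2 / ((Xbgw (d ::ₘ s) : ℚ) - 1) * C {G}
                + ((if a = 0 then eps else 0) + (if a = d-1 then eps else 0)))
            = (d:ℚ) * (2 / ((Xbgw (d ::ₘ s) : ℚ) - 1) * C {G}) + (eps + eps) := by
          rw [Finset.sum_add_distrib, Finset.sum_add_distrib, Finset.sum_const,
            Finset.card_range, nsmul_eq_mul]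
          congr 1
          congr 1
          · rw [Finset.sum_ite_eq' (Finset.range d) 0 (fun _ => eps)]
            exact if_pos (Finset.mem_range.2 (by omega))
          · rw [Finset.sum_ite_eq' (Finset.range d) (d-1) (fun _ => eps)]
            exact if_pos (Finset.mem_range.2 (by omega))
        rw [h2] at h1
        exact h1
      -- put everything together
      rw [hsum, hrecm]
      refine le_trans ?_ (add_le_add hA hBsum)
      rw [heps, hCG]
      have hxs_eq : (Xbgw s : ℚ) = ((Xbgw (d ::ₘ s):ℚ)) - (2*(d:ℚ)+1) := by
        rw [hXc]; push_cast; ring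
      rw [hxs_eq]
      have final := arith_final ((Xbgw (d ::ₘ s):ℚ)) ((G:ℚ)) ((d:ℚ)) (C {G+1}) hx6
        (Nat.cast_nonneg G) hkeyQ (hpos1 (G+1))
      linarith [final]
end

section
/- For integers 0 ≤ d1 ≤ d2 with g = d1 + d2 + 1 ≥ 1, define C(d1,d2) = (2^(2g)/(2g)!)·Σ_{h=0}^{d1} (g-2h)·F_h·F_{g-h} with F_h = ((2h-1)!!)^3/(2^(3h)·h!). Then C(d1,d2) ≤ 1/π. -/
open Nat Finset

/-- `F h = ((2h-1)!!)^3 / (2^(3h) h!)`. -/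
noncomputable def Fbgw (h : ℕ) : ℝ := ((2 * h - 1)‼ : ℝ) ^ 3 / (2 ^ (3 * h) * (h ! : ℝ))

open Filter Topology Real

/-! The sum is dominated by its extreme terms: `F (h + 1) / F h = (2h+1)^3 / (8(h+1))` increases
with `h`, so `F h * F (g - h) ≤ F 1 * F (g - 1) = g F g / (2g-1)^3` for `1 ≤ h ≤ g / 2`, and the
whole sum is at most `(4g+1)/4 · F g`. Normalized, `2^(2g)/(2g)! · F g` is the square of the Wallis
ratio `binom(2g, g) / 4^g`, and `(4g+1) · (binom(2g, g) / 4^g)^2` increases to `4/π` by Wallis'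
product. -/

noncomputable def wallisRatio (n : ℕ) : ℝ := n.centralBinom / 4 ^ n

lemma wallisRatio_zero : wallisRatio 0 = 1 := by simp [wallisRatio]

lemma wallisRatio_succ (n : ℕ) :
    wallisRatio (n + 1) = wallisRatio n * ((2 * n + 1) / (2 * n + 2)) := by
  have h : ((n + 1 : ℕ) : ℝ) * (n + 1).centralBinom = 2 * (2 * n + 1) * n.centralBinom := by
    exact_mod_cast n.succ_mul_centralBinom_succ
  push_cast at h
  rw [wallisRatio, wallisRatio, pow_succ]
  field_simp
  linear_combination 2 * h

lemma wallisRatio_sq_eq_inv_W (n : ℕ) : wallisRatio n ^ 2 = ((2 * n + 1) * Wallis.W n)⁻¹ := by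
  induction n with
  | zero => simp [wallisRatio_zero, Wallis.W]
  | succ n ih =>
    rw [wallisRatio_succ, Wallis.W_succ, mul_pow, ih]
    push_cast
    field_simp
    ring

lemma monotone_wallisRatio_sq : Monotone fun n : ℕ ↦ (4 * n + 1) * wallisRatio n ^ 2 := by
  refine monotone_nat_of_le_succ fun n ↦ ?_
  rw [wallisRatio_succ, mul_pow, div_pow]
  have hw := sq_nonneg (wallisRatio n)
  push_cast
  rw [← sub_nonneg]
  have : (4 * ((n : ℝ) + 1) + 1) * (wallisRatio n ^ 2 * ((2 * n + 1) ^ 2 / (2 * n + 2) ^ 2))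
      - (4 * n + 1) * wallisRatio n ^ 2 = wallisRatio n ^ 2 / (2 * n + 2) ^ 2 := by
    field_simp
    ring
  rw [this]
  positivity

lemma tendsto_wallisRatio_sq :
    Tendsto (fun n : ℕ ↦ (4 * n + 1) * wallisRatio n ^ 2) atTop (𝓝 (4 / π)) := by
  have hlin := tendsto_add_mul_div_add_mul_atTop_nhds (1 : ℝ) 1 4 two_ne_zero
  have hW := Wallis.tendsto_W_nhds_pi_div_two.inv₀ (by positivity)
  convert hlin.mul hW using 1
  · ext n
    rw [wallisRatio_sq_eq_inv_W]
    have := Wallis.W_pos n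
    field_simp
    ring
  · field_simp

lemma wallisRatio_sq_le (n : ℕ) : (4 * n + 1) * wallisRatio n ^ 2 ≤ 4 / π :=
  monotone_wallisRatio_sq.ge_of_tendsto tendsto_wallisRatio_sq n

lemma Fbgw_zero : Fbgw 0 = 1 := by simp [Fbgw]

lemma Fbgw_pos (n : ℕ) : 0 < Fbgw n := by
  have := doubleFactorial_pos (2 * n - 1)
  unfold Fbgw
  positivity

lemma Fbgw_succ (n : ℕ) : Fbgw (n + 1) = Fbgw n * ((2 * n + 1) ^ 3 / (8 * (n + 1))) := by
  rw [Fbgw, Fbgw, show 2 * (n + 1) - 1 = 2 * n + 1 by omega, doubleFactorial_add_one,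
    factorial_succ, show 3 * (n + 1) = 3 * n + 3 by ring, pow_add]
  push_cast
  have := n.factorial_pos
  field_simp
  ring

lemma two_pow_div_factorial_mul_Fbgw (n : ℕ) :
    (2 : ℝ) ^ (2 * n) / ((2 * n)! : ℝ) * Fbgw n = wallisRatio n ^ 2 := by
  induction n with
  | zero => simp [Fbgw_zero, wallisRatio_zero]
  | succ n ih =>
    rw [wallisRatio_succ, mul_pow, ← ih, Fbgw_succ, show 2 * (n + 1) = 2 * n + 1 + 1 by ring,
      factorial_succ, factorial_succ, pow_succ, pow_succ]
    push_cast
    have := (2 * n).factorial_pos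
    field_simp
    ring

lemma Fbgw_one : Fbgw 1 = 1 / 8 := by norm_num [Fbgw]

lemma Fbgw_succ_mul_le {a b : ℕ} (hab : a ≤ b) :
    Fbgw (a + 1) * Fbgw b ≤ Fbgw a * Fbgw (b + 1) := by
  have hratio : (2 * (a : ℝ) + 1) ^ 3 / (8 * (a + 1)) ≤ (2 * (b : ℝ) + 1) ^ 3 / (8 * (b + 1)) := by
    have ha : (0 : ℝ) ≤ a := a.cast_nonneg
    have hba : (0 : ℝ) ≤ b - a := by rw [sub_nonneg]; exact_mod_cast hab
    rw [div_le_div_iff₀ (by positivity) (by positivity)]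
    nlinarith [mul_nonneg (mul_nonneg ha ha) hba, mul_nonneg (mul_nonneg ha hba) hba,
      mul_nonneg (mul_nonneg hba hba) hba, mul_nonneg ha hba, mul_nonneg hba hba]
  rw [Fbgw_succ, Fbgw_succ]
  have := mul_le_mul_of_nonneg_left hratio (mul_pos (Fbgw_pos a) (Fbgw_pos b)).le
  linarith

lemma Fbgw_mul_Fbgw_sub_le {g h : ℕ} (h1 : 1 ≤ h) (hg : 2 * h ≤ g) :
    Fbgw h * Fbgw (g - h) ≤ Fbgw 1 * Fbgw (g - 1) := by
  induction h, h1 using Nat.le_induction with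
  | base => rfl
  | succ h h1 ih =>
    have hsub : g - h = g - (h + 1) + 1 := by omega
    calc Fbgw (h + 1) * Fbgw (g - (h + 1)) ≤ Fbgw h * Fbgw (g - h) := by
          rw [hsub]; exact Fbgw_succ_mul_le (by omega)
      _ ≤ Fbgw 1 * Fbgw (g - 1) := ih (by omega)

lemma Fbgw_one_mul (n : ℕ) : Fbgw 1 * Fbgw n = (n + 1) * Fbgw (n + 1) / (2 * n + 1) ^ 3 := by
  rw [Fbgw_one, Fbgw_succ]
  field_simp

lemma sum_two_point_le_extreme_terms {d n : ℕ} (hd : 2 * d ≤ n) :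
    ∑ h ∈ range (d + 1), (((n + 1 : ℕ) : ℝ) - 2 * h) * Fbgw h * Fbgw (n + 1 - h)
      ≤ (n + 1) * Fbgw (n + 1) + d * ((n + 1) * (Fbgw 1 * Fbgw n)) := by
  have hterm : ∀ i ∈ range d, (((n + 1 : ℕ) : ℝ) - 2 * (i + 1 : ℕ)) * Fbgw (i + 1)
      * Fbgw (n + 1 - (i + 1)) ≤ (n + 1) * (Fbgw 1 * Fbgw n) := by
    intro i hi
    have hi : 2 * (i + 1) ≤ n + 1 := by have := mem_range.mp hi; omega
    have hpair := Fbgw_mul_Fbgw_sub_le (by omega) hi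
    rw [Nat.add_sub_cancel] at hpair
    rw [mul_assoc]
    refine mul_le_mul ?_ hpair (mul_pos (Fbgw_pos _) (Fbgw_pos _)).le (by positivity)
    push_cast
    linarith
  rw [sum_range_succ', add_comm]
  simp only [CharP.cast_eq_zero, mul_zero, sub_zero, Fbgw_zero, mul_one, Nat.sub_zero]
  grw [sum_le_sum hterm]
  simp

lemma sum_two_point_le {d n : ℕ} (hd : 2 * d ≤ n) :
    ∑ h ∈ range (d + 1), (((n + 1 : ℕ) : ℝ) - 2 * h) * Fbgw h * Fbgw (n + 1 - h)
      ≤ (4 * (n + 1) + 1) / 4 * Fbgw (n + 1) := by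
  have hd' : 2 * (d : ℝ) ≤ n := by exact_mod_cast hd
  have hcount : 0 ≤ (2 * (n : ℝ) + 1) ^ 3 - 4 * d * (n + 1) ^ 2 := by
    have hn : (0 : ℝ) ≤ n := n.cast_nonneg
    nlinarith [mul_le_mul_of_nonneg_right hd' (sq_nonneg ((n : ℝ) + 1)), pow_nonneg hn 3,
      sq_nonneg (n : ℝ)]
  have hgap : (4 * ((n : ℝ) + 1) + 1) / 4 * Fbgw (n + 1)
      - ((n + 1) * Fbgw (n + 1) + d * ((n + 1) * (Fbgw 1 * Fbgw n)))
      = Fbgw (n + 1) * ((2 * n + 1) ^ 3 - 4 * d * (n + 1) ^ 2) / (4 * (2 * n + 1) ^ 3) := by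
    rw [Fbgw_one_mul]
    field_simp
    ring
  have := Fbgw_pos (n + 1)
  grw [sum_two_point_le_extreme_terms hd, ← sub_nonneg, hgap]
  positivity

/-- The normalized two-point BGW numbers are bounded above by `1/π`. -/
theorem bgw_two_point_upper_bound (d1 d2 : ℕ) (h : d1 ≤ d2) :
    (2 : ℝ) ^ (2 * (d1 + d2 + 1)) / ((2 * (d1 + d2 + 1))! : ℝ)
        * ∑ h ∈ Finset.range (d1 + 1),
            (((d1 + d2 + 1 : ℕ) : ℝ) - 2 * h) * Fbgw h * Fbgw (d1 + d2 + 1 - h)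
      ≤ 1 / Real.pi := by
  have hsum := sum_two_point_le (d := d1) (n := d1 + d2) (by omega)
  calc _ ≤ (2 : ℝ) ^ (2 * (d1 + d2 + 1)) / ((2 * (d1 + d2 + 1))! : ℝ)
          * ((4 * ((d1 + d2 : ℕ) + 1) + 1) / 4 * Fbgw (d1 + d2 + 1)) := by gcongr
    _ = (4 * ((d1 + d2 + 1 : ℕ) : ℝ) + 1) * wallisRatio (d1 + d2 + 1) ^ 2 / 4 := by
        rw [← two_pow_div_factorial_mul_Fbgw]; push_cast; ring
    _ ≤ 4 / π / 4 := by gcongr; exact wallisRatio_sq_le _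
    _ = 1 / π := by ring
end

section
/- Define A_j(d) for integers j ≥ 1 by A_j(d) = (-1)^(j-1)·(j-1)!·Σ_{0 ≤ l ≤ ⌊(j+1)/2⌋} ((2l-1)!!/(8^l·(l!)^3))·(j-2l)_{2l}·(d + 3/2 - l)_{j-1}, where (a)_b = a(a+1)···(a+b-1) is the Pochhammer symbol, with the convention A_0(d) = 0. Then A_1(d) = 1 and the A_j satisfy the two recursions: (i) A_{j+1}(d+1) − A_{j+1}(d) = 2(d+j+1)(2d+j+2)·A_j(d) − ((2d+j+3)(2d+3) + j²)·A_j(d+1), and (ii) −j³·A_j(d+1) + (2d−j+3)·A_{j+1}(d+1) − (2d+j+3)·A_{j+1}(d) = 0, for all j ≥ 0 and all d. -/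
open Nat Finset Polynomial

/-- The polynomials `A_j(d)` from the two-point BGW asymptotics, with `A_0 = 0`. -/
noncomputable def Abgw (j : ℕ) (d : ℚ) : ℚ :=
  if j = 0 then 0
  else
    (-1 : ℚ) ^ (j - 1) * ((j - 1)! : ℚ) *
      ∑ l ∈ Finset.range ((j + 1) / 2 + 1),
        (((2 * l - 1)‼ : ℕ) : ℚ) / (8 ^ l * ((l ! : ℕ) : ℚ) ^ 3)
          * Polynomial.eval ((j : ℚ) - 2 * l) (ascPochhammer ℚ (2 * l))
          * Polynomial.eval (d + 3 / 2 - l) (ascPochhammer ℚ (j - 1))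

/-- Coefficient `(2l-1)!!/(8^l (l!)^3)`. -/
noncomputable def Cb (l : ℕ) : ℚ :=
  (((2 * l - 1)‼ : ℕ) : ℚ) / (8 ^ l * ((l ! : ℕ) : ℚ) ^ 3)

/-- The Pochhammer factor `(n-2l)_{2l}`. -/
noncomputable def Fb (n l : ℕ) : ℚ :=
  Polynomial.eval ((n : ℚ) - 2 * l) (ascPochhammer ℚ (2 * l))

/-- The Pochhammer factor `(d+3/2-l)_k`. -/
noncomputable def Gb (k l : ℕ) (d : ℚ) : ℚ :=
  Polynomial.eval (d + 3 / 2 - l) (ascPochhammer ℚ k)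

lemma asc_eval_succ (n : ℕ) (x : ℚ) :
    (ascPochhammer ℚ (n + 1)).eval x = x * (ascPochhammer ℚ n).eval (x + 1) := by
  rw [ascPochhammer_succ_left]
  simp [eval_comp]

lemma asc_eval_neg : ∀ (N t : ℕ), t < N → (ascPochhammer ℚ N).eval (-(t : ℚ)) = 0 := by
  intro N
  induction N with
  | zero => intro t ht; exact absurd ht (Nat.not_lt_zero t)
  | succ M ih =>
    intro t ht
    rw [ascPochhammer_succ_eval]
    rcases Nat.lt_or_ge t M with h | h
    · rw [ih t h, zero_mul]
    · have : t = M := by omega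
      subst this
      simp

lemma Fb_vanish {n l : ℕ} (hn : n ≠ 0) (h : n ≤ 2 * l) : Fb n l = 0 := by
  unfold Fb
  have e : (n : ℚ) - 2 * l = -(((2 * l - n : ℕ)) : ℚ) := by
    have h2 := Nat.cast_sub (R := ℚ) h
    rw [h2]
    push_cast
    ring
  rw [e, asc_eval_neg _ _ (by omega)]

lemma Fb_zero (n : ℕ) : Fb n 0 = 1 := by
  simp [Fb, ascPochhammer_zero]

lemma Fb_succ (n l : ℕ) :
    Fb n (l + 1) = ((n : ℚ) - 2 * l - 2) * (((n : ℚ) - 2 * l - 1) * Fb n l) := by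
  unfold Fb
  have h1 : 2 * (l + 1) = (2 * l) + 1 + 1 := by ring
  rw [h1, asc_eval_succ, asc_eval_succ]
  have e0 : ((n : ℚ) - 2 * (↑(l + 1) : ℚ)) = (n : ℚ) - 2 * l - 2 := by push_cast; ring
  rw [e0]
  have e1 : (n : ℚ) - 2 * l - 2 + 1 + 1 = (n : ℚ) - 2 * l := by ring
  rw [e1]
  have e2 : (n : ℚ) - 2 * l - 2 + 1 = (n : ℚ) - 2 * l - 1 := by ring
  rw [e2]

lemma Fb_rel (n l : ℕ) : ((n : ℚ) - 2 * l) * Fb (n + 1) l = (n : ℚ) * Fb n l := by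
  unfold Fb
  have h1 := asc_eval_succ (2 * l) ((n : ℚ) - 2 * l)
  have h2 := ascPochhammer_succ_eval (S := ℚ) (2 * l) ((n : ℚ) - 2 * l)
  have e1 : (n : ℚ) - 2 * l + 1 = ((n + 1 : ℕ) : ℚ) - 2 * l := by push_cast; ring
  rw [e1] at h1
  push_cast at h1 h2 ⊢
  linear_combination h2 - h1

lemma Gb_shift (k l : ℕ) (d : ℚ) : Gb k (l + 1) (d + 1) = Gb k l d := by
  unfold Gb
  congr 1
  push_cast
  ring

lemma Gb_right (k l : ℕ) (d : ℚ) : Gb (k + 1) l d = Gb k l d * (d + 3 / 2 - l + k) := by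
  unfold Gb
  exact ascPochhammer_succ_eval k (d + 3 / 2 - l)

lemma Gb_left (k l : ℕ) (d : ℚ) : Gb (k + 1) l d = (d + 3 / 2 - l) * Gb k l (d + 1) := by
  unfold Gb
  rw [asc_eval_succ]
  have e : d + 3 / 2 - (l : ℚ) + 1 = d + 1 + 3 / 2 - l := by ring
  rw [e]

lemma Gb_rel (k l : ℕ) (d : ℚ) :
    (d + 1 / 2 - l) * Gb k l d = Gb k (l + 1) d * (d + 1 / 2 - l + k) := by
  have h1 := Gb_left k (l + 1) d
  rw [Gb_shift] at h1
  have h2 := Gb_right k (l + 1) d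
  push_cast at h1 h2
  linear_combination h2 - h1

lemma Cb_zero : Cb 0 = 1 := by
  simp [Cb, Nat.doubleFactorial]

lemma Cb_rel (l : ℕ) : Cb (l + 1) * (8 * ((l : ℚ) + 1) ^ 3) = (2 * (l : ℚ) + 1) * Cb l := by
  unfold Cb
  have hd : (2 * (l + 1) - 1)‼ = (2 * l + 1) * (2 * l - 1)‼ := by
    rcases l with _ | m
    · simp [Nat.doubleFactorial]
    · have h : 2 * (m + 1 + 1) - 1 = (2 * (m + 1) - 1) + 2 := by omega
      rw [h, Nat.doubleFactorial_add_two]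
      congr 1
  rw [hd, Nat.factorial_succ]
  have h1 : ((l ! : ℕ) : ℚ) ≠ 0 := Nat.cast_ne_zero.mpr (Nat.factorial_ne_zero l)
  have h3 : (8 : ℚ) ^ l ≠ 0 := by positivity
  have h4 : ((l : ℚ) + 1) ≠ 0 := by positivity
  push_cast
  field_simp
  ring

/-- Expansion of `Abgw` over an extended summation range. -/
lemma Abgw_eq_sum (m N : ℕ) (hN : (m + 2) / 2 + 1 ≤ N) (d : ℚ) :
    Abgw (m + 1) d
      = (-1 : ℚ) ^ m * (m ! : ℚ) * ∑ l ∈ Finset.range N, Cb l * Fb (m + 1) l * Gb m l d := by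
  rw [Abgw, if_neg (Nat.succ_ne_zero m)]
  have hidx : m + 1 - 1 = m := by omega
  rw [hidx]
  have hidx2 : (m + 1 + 1) / 2 + 1 = (m + 2) / 2 + 1 := by omega
  rw [hidx2]
  congr 1
  refine Finset.sum_subset (Finset.range_subset_range.mpr hN) (fun x hx hnx => ?_)
  have hx2 : (m + 2) / 2 + 1 ≤ x := by
    simp only [Finset.mem_range, not_lt] at hnx
    exact hnx
  have hv : Fb (m + 1) x = 0 := Fb_vanish (Nat.succ_ne_zero m) (by omega)
  show Cb x * Fb (m + 1) x * Gb m x d = 0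
  rw [hv, mul_zero, zero_mul]

/-- Telescoping helper for recursion (i). -/
noncomputable def Vb (k : ℕ) (d : ℚ) : ℕ → ℚ
  | 0 => 0
  | l + 1 =>
      -((2 * (l : ℚ) + 1) * ((k : ℚ) - 2 * l)) * ((-1 : ℚ) ^ k * (k ! : ℚ))
        * Cb l * Fb (k + 1) l * Gb k l d

lemma Abgw_zero (d : ℚ) : Abgw 0 d = 0 := by simp [Abgw]

lemma Abgw_one (d : ℚ) : Abgw 1 d = 1 := by
  show Abgw (0 + 1) d = 1
  rw [Abgw_eq_sum 0 2 (by omega) d]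
  rw [Finset.sum_range_succ, Finset.sum_range_succ, Finset.sum_range_zero]
  have h1 : Fb (0 + 1) 1 = 0 := Fb_vanish (Nat.succ_ne_zero 0) (by omega)
  rw [h1, Cb_zero, Fb_zero]
  have h2 : Gb 0 0 d = 1 := by simp [Gb, ascPochhammer_zero]
  rw [h2]
  norm_num

/-- `A_1(d) = 1` and the two recursions for the polynomials `A_j(d)`. -/
theorem Abgw_recursions :
    (∀ d : ℚ, Abgw 1 d = 1) ∧
      (∀ (j : ℕ) (d : ℚ),
        Abgw (j + 1) (d + 1) - Abgw (j + 1) d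
          = 2 * (d + j + 1) * (2 * d + j + 2) * Abgw j d
            - ((2 * d + j + 3) * (2 * d + 3) + (j : ℚ) ^ 2) * Abgw j (d + 1)) ∧
      (∀ (j : ℕ) (d : ℚ),
        -(j : ℚ) ^ 3 * Abgw j (d + 1) + (2 * d - j + 3) * Abgw (j + 1) (d + 1)
          - (2 * d + j + 3) * Abgw (j + 1) d = 0) := by
  refine ⟨Abgw_one, ?_, ?_⟩
  · -- recursion (i)
    intro j d
    rcases j with _ | k
    · simp only [Nat.zero_add, zero_add]
      rw [Abgw_one, Abgw_one, Abgw_zero, Abgw_zero]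
      push_cast
      ring
    · rw [Abgw_eq_sum (k + 1) (k + 4) (by omega) (d + 1),
        Abgw_eq_sum (k + 1) (k + 4) (by omega) d,
        Abgw_eq_sum k (k + 4) (by omega) d,
        Abgw_eq_sum k (k + 4) (by omega) (d + 1)]
      rw [← sub_eq_zero]
      simp only [Finset.mul_sum]
      simp only [← Finset.sum_sub_distrib]
      have main : ∑ l ∈ Finset.range (k + 4), (Vb k d l - Vb k d (l + 1)) = 0 := by
        rw [Finset.sum_range_sub' (Vb k d) (k + 4)]
        have hV : Vb k d (k + 4) = 0 := by
          show Vb k d ((k + 3) + 1) = 0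
          have hv : Fb (k + 1) (k + 3) = 0 :=
            Fb_vanish (Nat.succ_ne_zero k) (by omega)
          simp [Vb, hv]
        rw [hV]
        simp [Vb]
      refine Eq.trans (Finset.sum_congr rfl fun l hl => ?_) main
      rcases l with _ | m
      · -- boundary term l = 0
        have hB := (Gb_left k 0 d).symm.trans (Gb_right k 0 d)
        simp only [Vb]
        rw [Gb_right k 0 (d + 1), Gb_left k 0 d]
        simp only [Fb_zero, Nat.factorial_succ]
        rw [Cb_zero]
        push_cast at hB ⊢
        linear_combination (((-1 : ℚ) ^ k * (k ! : ℚ)) * 2 * (2 * d + (k : ℚ) + 4)) * hB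
      · -- telescoping step at l = m + 1
        have h8 : (8 : ℚ) * ((m : ℚ) + 1) ^ 3 ≠ 0 := by positivity
        refine mul_left_cancel₀ h8 ?_
        have hC := Cb_rel m
        have hG := Gb_rel k m d
        have hF := Fb_rel (k + 1) m
        simp only [Vb]
        rw [Gb_right k (m + 1) (d + 1), Gb_left k (m + 1) d, Gb_shift k m d,
          Fb_succ (k + 1 + 1) m, Fb_succ (k + 1) m]
        simp only [Nat.factorial_succ]
        push_cast at hF hC hG ⊢
        linear_combination
          (((-1 : ℚ) ^ k * (k ! : ℚ)) * (-(8 * ((m : ℚ) + 1) ^ 3) * ((k : ℚ) - 2 * m)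
              * Fb (k + 1) m * Gb k m d)) * hC
          + (((-1 : ℚ) ^ k * (k ! : ℚ)) * (16 * ((m : ℚ) + 1) ^ 3
              * (8 * (m : ℚ) ^ 3 + 8 * d * (m : ℚ) ^ 2 + 28 * (m : ℚ) ^ 2
                - 4 * (k : ℚ) * (m : ℚ) ^ 2 - 8 * d * (k : ℚ) * (m : ℚ) + 4 * d * (m : ℚ)
                - 24 * (k : ℚ) * (m : ℚ) + 12 * (m : ℚ) - 2 * (k : ℚ) ^ 2 * (m : ℚ)
                + 2 * d * (k : ℚ) ^ 2 - 2 * d * (k : ℚ) - 6 * (k : ℚ) + (k : ℚ) ^ 3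
                + 5 * (k : ℚ) ^ 2)
              * Cb (m + 1) * Fb (k + 1) m)) * hG
          + (((-1 : ℚ) ^ k * (k ! : ℚ)) * (-(8 * ((m : ℚ) + 1) ^ 3) * ((k : ℚ) + 1) ^ 2
              * ((k : ℚ) - 2 * m) * Cb (m + 1) * Gb k m d)) * hF
  · -- recursion (ii)
    intro j d
    rcases j with _ | k
    · simp only [Nat.zero_add, zero_add]
      rw [Abgw_one, Abgw_one]
      push_cast
      ring
    · rw [Abgw_eq_sum (k + 1) (k + 4) (by omega) (d + 1),
        Abgw_eq_sum (k + 1) (k + 4) (by omega) d,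
        Abgw_eq_sum k (k + 4) (by omega) (d + 1)]
      simp only [Finset.mul_sum]
      simp only [← Finset.sum_add_distrib, ← Finset.sum_sub_distrib]
      refine Finset.sum_eq_zero fun l hl => ?_
      have hF := Fb_rel (k + 1) l
      rw [Gb_right k l (d + 1), Gb_left k l d]
      simp only [Nat.factorial_succ]
      push_cast at hF ⊢
      linear_combination
        (((k : ℚ) + 1) ^ 2 * ((-1 : ℚ) ^ k * (k ! : ℚ)) * Cb l * Gb k l (d + 1)) * hF
end

section
/- Assign degrees deg u_i = i + 2 for all i ≥ 0. Then the polynomial m_d(u0,...,u_{2d}) defined by the KdV generating relation is homogeneous of degree 2d + 2, for every d ≥ 0. -/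
open Nat Finset MvPolynomial

/-!
Since `b₀ = 1`, the coefficient of `λ^(-k)` in the generating relation is linear in `b_{k+1}`:
`4 b_{k+1}` is a polynomial in `u₀`, `b₀, …, b_k` and their `∂`-derivatives. The derivation `∂`
raises the weight by one, as it sends `u_i` (weight `i + 2`) to `u_{i+1}`, so by strong induction
every term of that polynomial has weight `2k + 2`. Hence `b_k` is homogeneous of weight `2k`,
and so is `m_d = b_{d+1} / (2d+1)!!` of weight `2d + 2`.
-/

namespace MvPolynomial

variable {R σ M : Type*} [CommSemiring R] [AddCommMonoid M] {w : σ → M}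

theorem IsWeightedHomogeneous.derivation {D : Derivation R (MvPolynomial σ R) (MvPolynomial σ R)}
    {k : M} (hD : ∀ i, (D (X i)).IsWeightedHomogeneous w (w i + k))
    {p : MvPolynomial σ R} {m : M} (hp : p.IsWeightedHomogeneous w m) :
    (D p).IsWeightedHomogeneous w (m + k) := by
  induction hp using IsWeightedHomogeneous.induction_on with
  | zero => simpa using isWeightedHomogeneous_zero R w (m + k)
  | add p q _ _ hp hq => simpa using hp.add hq
  | monomial d r hd =>
    have hD_eq : D = mkDerivation R fun i => D (X i) := derivation_ext fun i => by simp
    rw [hD_eq, mkDerivation_monomial, smul_eq_C_mul]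
    refine .C_mul (.sum _ _ _ fun i hi => ?_) r
    rw [← hd, ← Finsupp.weight_sub_single_add (Finsupp.mem_support_iff.1 hi), add_assoc]
    exact (isWeightedHomogeneous_monomial _ _ _ rfl).mul (hD i)

theorem IsWeightedHomogeneous.ofNat_mul {p : MvPolynomial σ R} {m : M}
    (hp : p.IsWeightedHomogeneous w m) (a : ℕ) [a.AtLeastTwo] :
    (OfNat.ofNat a * p : MvPolynomial σ R).IsWeightedHomogeneous w m := by
  have h := hp.C_mul (OfNat.ofNat a : R)
  rwa [map_ofNat] at h

theorem isWeightedHomogeneous_sum_mul {ι : Type*} {s : Finset ι} {f g : ι → MvPolynomial σ R}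
    {df dg : ι → M} {n : M} (hf : ∀ i ∈ s, (f i).IsWeightedHomogeneous w (df i))
    (hg : ∀ i ∈ s, (g i).IsWeightedHomogeneous w (dg i)) (hn : ∀ i ∈ s, df i + dg i = n) :
    (∑ i ∈ s, f i * g i).IsWeightedHomogeneous w n :=
  .sum _ _ _ fun i hi => hn i hi ▸ (hf i hi).mul (hg i hi)

theorem isWeightedHomogeneous_C_mul_iff {K : Type*} [Field K] {c : K} (hc : c ≠ 0)
    {p : MvPolynomial σ K} {m : M} :
    (C c * p).IsWeightedHomogeneous w m ↔ p.IsWeightedHomogeneous w m := by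
  simp_rw [← mem_weightedHomogeneousSubmodule, ← smul_eq_C_mul, Submodule.smul_mem_iff _ hc]

end MvPolynomial

/-- The coefficient of `λ^(-k)` in `b ∂²b − ½ (∂b)² − 2(λ − 2u₀) b² + 2λ`, where
`b = ∑ b_j λ^(-j)`, `∂ = D` and `u₀ = X 0`. -/
noncomputable def kdvRelation (D : MvPolynomial ℕ ℚ → MvPolynomial ℕ ℚ)
    (b : ℕ → MvPolynomial ℕ ℚ) (k : ℕ) : MvPolynomial ℕ ℚ :=
  (∑ i ∈ range (k + 1), b i * D (D (b (k - i))))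
    - C (1 / 2 : ℚ) * (∑ i ∈ range (k + 1), D (b i) * D (b (k - i)))
    - 2 * (∑ i ∈ range (k + 2), b i * b (k + 1 - i))
    + 4 * X 0 * (∑ i ∈ range (k + 1), b i * b (k - i))

section KdV

variable {D : MvPolynomial ℕ ℚ → MvPolynomial ℕ ℚ} {b : ℕ → MvPolynomial ℕ ℚ}

theorem four_mul_succ_eq_of_kdvRelation (hb0 : b 0 = 1) {k : ℕ}
    (hrel : kdvRelation D b k = 0) :
    4 * b (k + 1) =
      (∑ i ∈ range (k + 1), b i * D (D (b (k - i))))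
        - C (1 / 2 : ℚ) * (∑ i ∈ range (k + 1), D (b i) * D (b (k - i)))
        - 2 * (∑ i ∈ range k, b (i + 1) * b (k - i))
        + 4 * X 0 * (∑ i ∈ range (k + 1), b i * b (k - i)) := by
  have hsplit : ∑ i ∈ range (k + 2), b i * b (k + 1 - i)
      = 2 * b (k + 1) + ∑ i ∈ range k, b (i + 1) * b (k - i) := by
    rw [sum_range_succ', sum_range_succ]
    simp only [Nat.add_sub_add_right, Nat.sub_zero, Nat.sub_self, hb0]
    ring
  rw [kdvRelation, hsplit] at hrel
  linear_combination -hrel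

theorem isWeightedHomogeneous_of_kdvRelation
    (hD : ∀ {p : MvPolynomial ℕ ℚ} {n : ℕ}, p.IsWeightedHomogeneous (· + 2) n →
      (D p).IsWeightedHomogeneous (· + 2) (n + 1))
    (hb0 : b 0 = 1) (hrel : ∀ k, kdvRelation D b k = 0) (k : ℕ) :
    (b k).IsWeightedHomogeneous (· + 2) (2 * k) := by
  induction k using Nat.strong_induction_on with
  | _ k ih =>
    rcases k with _ | k
    · simpa [hb0] using isWeightedHomogeneous_one ℚ (· + 2 : ℕ → ℕ)
    have hb : ∀ i ∈ range (k + 1), (b i).IsWeightedHomogeneous (· + 2) (2 * i) :=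
      fun i hi => ih i (by simpa using hi)
    have hb' : ∀ i ∈ range (k + 1), (b (k - i)).IsWeightedHomogeneous (· + 2) (2 * (k - i)) :=
      fun i _ => ih (k - i) (by omega)
    have hdeg : ∀ i ∈ range (k + 1), 2 * i + 2 * (k - i) = 2 * k := fun i hi => by
      simp only [mem_range] at hi; omega
    have h1 : (∑ i ∈ range (k + 1), b i * D (D (b (k - i)))).IsWeightedHomogeneous (· + 2)
        (2 * (k + 1)) :=
      isWeightedHomogeneous_sum_mul hb (fun i hi => hD (hD (hb' i hi)))
        fun i hi => by have := hdeg i hi; omega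
    have h2 : (∑ i ∈ range (k + 1), D (b i) * D (b (k - i))).IsWeightedHomogeneous (· + 2)
        (2 * (k + 1)) :=
      isWeightedHomogeneous_sum_mul (fun i hi => hD (hb i hi)) (fun i hi => hD (hb' i hi))
        fun i hi => by have := hdeg i hi; omega
    have h3 : (∑ i ∈ range k, b (i + 1) * b (k - i)).IsWeightedHomogeneous (· + 2)
        (2 * (k + 1)) := by
      refine isWeightedHomogeneous_sum_mul (fun i hi => ih (i + 1) ?_)
        (fun i _ => ih (k - i) (by omega)) fun i hi => ?_ <;>
      simp only [mem_range] at hi <;> omega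
    have h4 : (X 0 * ∑ i ∈ range (k + 1), b i * b (k - i)).IsWeightedHomogeneous (· + 2)
        (2 * (k + 1)) := by
      have h := (isWeightedHomogeneous_X ℚ (· + 2 : ℕ → ℕ) 0).mul
        (isWeightedHomogeneous_sum_mul hb hb' hdeg)
      rwa [show 0 + 2 + 2 * k = 2 * (k + 1) by ring] at h
    rw [← isWeightedHomogeneous_C_mul_iff (four_ne_zero : (4 : ℚ) ≠ 0), map_ofNat,
      four_mul_succ_eq_of_kdvRelation hb0 (hrel k), mul_assoc]
    exact ((h1.sub (h2.C_mul _)).sub (h3.ofNat_mul 2)).add (h4.ofNat_mul 4)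

end KdV

/-- With the degree assignment `deg u_i = i + 2`, each Gelfand–Dickey density `m_d`
(defined by the KdV generating relation, encoded coefficientwise in `1/λ` with
`b_0 = 1`, `b_{d+1} = (2d+1)!! m_d` and the derivation `∂(u_i) = u_{i+1}`) is
weighted homogeneous of degree `2d + 2`. -/
theorem gelfand_dickey_densities_weighted_homogeneous
    (D : Derivation ℚ (MvPolynomial ℕ ℚ) (MvPolynomial ℕ ℚ))
    (hD : ∀ i : ℕ, D (MvPolynomial.X i) = MvPolynomial.X (i + 1))
    (m b : ℕ → MvPolynomial ℕ ℚ)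
    (hb0 : b 0 = 1)
    (hbk : ∀ d : ℕ, b (d + 1) = MvPolynomial.C (((2 * d + 1)‼ : ℕ) : ℚ) * m d)
    (hrel : ∀ k : ℕ,
      (∑ i ∈ Finset.range (k + 1), b i * D (D (b (k - i))))
        - MvPolynomial.C (1 / 2 : ℚ) * (∑ i ∈ Finset.range (k + 1), D (b i) * D (b (k - i)))
        - 2 * (∑ i ∈ Finset.range (k + 2), b i * b (k + 1 - i))
        + 4 * MvPolynomial.X 0 * (∑ i ∈ Finset.range (k + 1), b i * b (k - i)) = 0) :
    ∀ d : ℕ, MvPolynomial.IsWeightedHomogeneous (fun i : ℕ => i + 2) (m d) (2 * d + 2) := by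
  have hD_deg : ∀ {p : MvPolynomial ℕ ℚ} {n : ℕ}, p.IsWeightedHomogeneous (· + 2) n →
      (D p).IsWeightedHomogeneous (· + 2) (n + 1) :=
    .derivation fun i => by rw [hD]; exact isWeightedHomogeneous_X ℚ _ (i + 1)
  intro d
  have hc : (((2 * d + 1)‼ : ℕ) : ℚ) ≠ 0 := Nat.cast_ne_zero.2 (Nat.doubleFactorial_pos _).ne'
  rw [← isWeightedHomogeneous_C_mul_iff hc, ← hbk]
  exact isWeightedHomogeneous_of_kdvRelation hD_deg hb0 hrel (d + 1)
end

section
/- Let (y_n)_{n≥0} and (v_n)_{n≥0} be sequences of positive reals related by y_n = (Kn+1)·v_n − Σ_{n1+n2=n, n1,n2≥0} v_{n1}·v_{n2}, where K ≥ 3 is a fixed integer. Suppose y_n ~ c·(Kn+1)!/(K^n·n!) as n → ∞ for some constant c > 0, and suppose v_n/v_{n-1} → ∞. Then v_n ~ y_n/(Kn−1) as n → ∞. -/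
/-!
Put `a_n = (Kn+1)!/(K^n n!)` and `t_n = v_n / a_n`. The ratio `a_{n+1}/a_n` is a product of
`K - 1 ≥ 2` linear factors in `n`, so `a` is log-convex with `a_{n+1} ≥ 4(n+1)^2 a_n`, whence
`a_i a_{n-i} ≤ 4 a_1 a_n / (n^2 2^{min(i, n-i)})`. Since `v_0 < 1`, the relation then gives
`t_n ≤ C + κ/n^2 Σ t_i t_{n-i} 2^{-min(i, n-i)}`. A crude induction bounds `t_n` by `B g^n`, and
any such bound improves to `B' max(g/2, 1)^n`: the weight `2^{-i}` absorbs the old bound on the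
shorter factor, and the remaining recursion is contracting once `n` is large. So `t` is bounded,
the convolution is `O(a_n/n) = o(y_n)`, and `(Kn + 1 - 2v_0) v_n = y_n + o(y_n)`.
-/

open Nat Finset Filter Asymptotics

namespace RapidGrowth

noncomputable def factorialRatio (K n : ℕ) : ℝ :=
  ((K * n + 1)! : ℝ) / ((K : ℝ) ^ n * (n ! : ℝ))

/-- The ratio `factorialRatio K (m + 1) / factorialRatio K m`: the factors
`(K m + 2) ⋯ (K m + K + 1)` of `(K (m + 1) + 1)! / (K m + 1)!` except `K (m + 1)`, which cancels
against `K (m + 1)` from the denominator. -/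
def stepFactor (K m : ℕ) : ℕ := ∏ u ∈ (range K).erase (K - 2), (K * m + 2 + u)

lemma card_erase_range_sub_two (K : ℕ) : #((range K).erase (K - 2)) = K - 1 := by
  rcases K with _ | K
  · simp
  · rw [card_erase_of_mem (mem_range.2 (by omega)), card_range]

lemma factorialRatio_pos {K : ℕ} (hK : 0 < K) (n : ℕ) : 0 < factorialRatio K n := by
  unfold factorialRatio
  have : (0 : ℝ) < K := by exact_mod_cast hK
  positivity

lemma factorialRatio_succ {K : ℕ} (hK : 2 ≤ K) (m : ℕ) :
    factorialRatio K (m + 1) = factorialRatio K m * stepFactor K m := by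
  have hfact : (K * (m + 1) + 1)! = (K * m + 1)! * ∏ u ∈ range K, (K * m + 2 + u) := by
    rw [show K * (m + 1) + 1 = K * m + 1 + K by ring, ← Nat.factorial_mul_ascFactorial,
      Nat.ascFactorial_eq_prod_range]
  have hsplit : ∏ u ∈ range K, (K * m + 2 + u) = K * (m + 1) * stepFactor K m := by
    rw [stepFactor, ← mul_prod_erase _ _ (mem_range.2 (by omega : K - 2 < K))]
    congr 1
    zify [hK]
    ring
  have hK0 : (K : ℝ) ≠ 0 := by exact_mod_cast (by omega : K ≠ 0)
  unfold factorialRatio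
  rw [hfact, hsplit, pow_succ, Nat.factorial_succ m]
  push_cast
  field_simp

lemma pow_mul_stepFactor_le {K i j l : ℕ} (h : ∀ u < K, l * (K * i + 2 + u) ≤ K * j + 2 + u) :
    l ^ (K - 1) * stepFactor K i ≤ stepFactor K j := by
  rw [stepFactor, stepFactor, ← card_erase_range_sub_two, ← prod_const, ← prod_mul_distrib]
  exact prod_le_prod' fun u hu => h u (mem_range.1 (mem_of_mem_erase hu))

lemma stepFactor_mono {K i j : ℕ} (h : i ≤ j) : stepFactor K i ≤ stepFactor K j := by
  simpa using pow_mul_stepFactor_le (K := K) (l := 1) fun u _ => by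
    have := Nat.mul_le_mul_left K h
    omega

lemma four_mul_stepFactor_le {K i j : ℕ} (hK : 3 ≤ K) (h : 2 * i + 2 ≤ j) :
    4 * stepFactor K i ≤ stepFactor K j := by
  refine le_trans ?_ (pow_mul_stepFactor_le (i := i) (l := 2) fun u hu => ?_)
  · exact Nat.mul_le_mul_right _
      (by simpa using Nat.pow_le_pow_right two_pos (by omega : 2 ≤ K - 1))
  · have := Nat.mul_le_mul_left K h
    nlinarith

lemma sq_le_stepFactor {K : ℕ} (hK : 3 ≤ K) (m : ℕ) :
    (2 * (m + 1)) ^ 2 ≤ stepFactor K m := by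
  calc (2 * (m + 1)) ^ 2 ≤ (2 * (m + 1)) ^ (K - 1) := Nat.pow_le_pow_right (by omega) (by omega)
    _ ≤ stepFactor K m := by
      rw [← card_erase_range_sub_two]
      refine pow_card_le_prod _ _ _ fun u _ => ?_
      nlinarith

section LogConvex

variable {a : ℕ → ℝ}

lemma mul_le_mul_spread
    (hconv : ∀ i j, i ≤ j → a (i + 1) * a j ≤ a i * a (j + 1)) {p i j : ℕ} (hpi : p ≤ i)
    (hij : i ≤ j) : a i * a j ≤ a p * a (i + j - p) := by
  induction i, hpi using Nat.le_induction generalizing j with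
  | base => rw [Nat.add_sub_cancel_left]
  | succ i hpi ih =>
    calc a (i + 1) * a j ≤ a i * a (j + 1) := hconv i j (by omega)
      _ ≤ a p * a (i + (j + 1) - p) := ih (by omega)
      _ = a p * a (i + 1 + j - p) := by rw [show i + (j + 1) - p = i + 1 + j - p by omega]

lemma four_pow_mul_le
    (hfar : ∀ i j, 2 * i + 2 ≤ j → 4 * (a (i + 1) * a j) ≤ a i * a (j + 1)) {i j : ℕ}
    (hi : 1 ≤ i) (hij : 2 * i ≤ j) : 4 ^ (i - 1) * (a i * a j) ≤ a 1 * a (i + j - 1) := by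
  induction i, hi using Nat.le_induction generalizing j with
  | base => simp
  | succ i hi ih =>
    calc (4 : ℝ) ^ (i + 1 - 1) * (a (i + 1) * a j) = 4 ^ (i - 1) * (4 * (a (i + 1) * a j)) := by
          rw [show i + 1 - 1 = i - 1 + 1 by omega, pow_succ, mul_assoc]
      _ ≤ 4 ^ (i - 1) * (a i * a (j + 1)) :=
          mul_le_mul_of_nonneg_left (hfar i j (by omega)) (by positivity)
      _ ≤ a 1 * a (i + (j + 1) - 1) := ih (by omega)
      _ = a 1 * a (i + 1 + j - 1) := by rw [show i + (j + 1) - 1 = i + 1 + j - 1 by omega]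

/-- Splits far from the middle are handled by `four_pow_mul_le`; a split `(i, j)` near the
middle is first moved to `(p, i + j - p)` with `p = (i + j) / 3`, which is far from it. -/
lemma two_pow_min_mul_le (ha : ∀ n, 0 ≤ a n)
    (hconv : ∀ i j, i ≤ j → a (i + 1) * a j ≤ a i * a (j + 1))
    (hfar : ∀ i j, 2 * i + 2 ≤ j → 4 * (a (i + 1) * a j) ≤ a i * a (j + 1)) {i j : ℕ}
    (hi : 1 ≤ i) (hj : 1 ≤ j) : 2 ^ min i j * (a i * a j) ≤ 16 * (a 1 * a (i + j - 1)) := by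
  wlog hij : i ≤ j generalizing i j
  · simpa only [min_comm, mul_comm (a i), add_comm i] using this hj hi (by omega)
  rw [min_eq_left hij]
  have h1 : 0 ≤ a 1 * a (i + j - 1) := mul_nonneg (ha _) (ha _)
  have hij0 : 0 ≤ a i * a j := mul_nonneg (ha _) (ha _)
  by_cases hfar_ij : 2 * i ≤ j
  · have h2 : (2 : ℝ) ^ i ≤ 4 * 4 ^ (i - 1) := by
      rw [mul_pow_sub_one (by omega)]
      exact pow_le_pow_left₀ (by norm_num) (by norm_num) i
    have h4 := four_pow_mul_le hfar hi hfar_ij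
    nlinarith
  by_cases hi1 : i = 1
  · subst hi1
    simp only [pow_one, show 1 + j - 1 = j by omega]
    linarith
  obtain ⟨p, hp⟩ : ∃ p, p = (i + j) / 3 := ⟨_, rfl⟩
  have hmove := mul_le_mul_spread hconv (p := p) (by omega) hij
  have hfar_p := four_pow_mul_le hfar (i := p) (j := i + j - p) (by omega) (by omega)
  rw [show p + (i + j - p) - 1 = i + j - 1 by omega] at hfar_p
  have h2 : (2 : ℝ) ^ i ≤ 16 * 4 ^ (p - 1) := by
    rw [show (16 : ℝ) = 2 ^ 4 by norm_num, show (4 : ℝ) = 2 ^ 2 by norm_num, ← pow_mul,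
      ← pow_add]
    exact pow_le_pow_right₀ (by norm_num) (by omega)
  have hp0 : 0 ≤ a p * a (i + j - p) := mul_nonneg (ha _) (ha _)
  calc (2 : ℝ) ^ i * (a i * a j) ≤ 16 * 4 ^ (p - 1) * (a p * a (i + j - p)) :=
        mul_le_mul h2 hmove hij0 (by positivity)
    _ ≤ 16 * (a 1 * a (i + j - 1)) := by rw [mul_assoc]; linarith

end LogConvex

section FactorialRatio

variable {K : ℕ}

lemma factorialRatio_succ_mul_le (hK : 2 ≤ K) {i j : ℕ} (h : i ≤ j) :
    factorialRatio K (i + 1) * factorialRatio K j ≤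
      factorialRatio K i * factorialRatio K (j + 1) := by
  have hr : (stepFactor K i : ℝ) ≤ stepFactor K j := by exact_mod_cast stepFactor_mono h
  have := mul_le_mul_of_nonneg_left hr
    (mul_pos (factorialRatio_pos (K := K) (by omega) i)
      (factorialRatio_pos (K := K) (by omega) j)).le
  rw [factorialRatio_succ hK, factorialRatio_succ hK]
  linarith

lemma four_mul_factorialRatio_succ_mul_le (hK : 3 ≤ K) {i j : ℕ} (h : 2 * i + 2 ≤ j) :
    4 * (factorialRatio K (i + 1) * factorialRatio K j) ≤
      factorialRatio K i * factorialRatio K (j + 1) := by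
  have hr : 4 * (stepFactor K i : ℝ) ≤ stepFactor K j := by
    exact_mod_cast four_mul_stepFactor_le hK h
  have := mul_le_mul_of_nonneg_left hr
    (mul_pos (factorialRatio_pos (K := K) (by omega) i)
      (factorialRatio_pos (K := K) (by omega) j)).le
  rw [factorialRatio_succ (by omega), factorialRatio_succ (by omega)]
  linarith

lemma four_mul_sq_mul_factorialRatio_le (hK : 3 ≤ K) (m : ℕ) :
    4 * ((m : ℝ) + 1) ^ 2 * factorialRatio K m ≤ factorialRatio K (m + 1) := by
  have hr : 4 * ((m : ℝ) + 1) ^ 2 ≤ stepFactor K m := by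
    have := sq_le_stepFactor hK m
    rw [mul_pow] at this
    exact_mod_cast (by linarith : 4 * (m + 1) ^ 2 ≤ stepFactor K m)
  rw [factorialRatio_succ (by omega)]
  have := factorialRatio_pos (by omega : 0 < K) m
  nlinarith

lemma factorialRatio_mul_le (hK : 3 ≤ K) {i n : ℕ} (hi : 1 ≤ i) (hin : i < n) :
    factorialRatio K i * factorialRatio K (n - i) ≤
      4 * factorialRatio K 1 / (n : ℝ) ^ 2 / 2 ^ min i (n - i) * factorialRatio K n := by
  have ha := fun m => (factorialRatio_pos (K := K) (by omega) m).le
  have hsplit := two_pow_min_mul_le ha (fun i j => factorialRatio_succ_mul_le (by omega))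
    (fun i j => four_mul_factorialRatio_succ_mul_le hK) hi (by omega : 1 ≤ n - i)
  have hlast := four_mul_sq_mul_factorialRatio_le hK (n - 1)
  rw [show i + (n - i) - 1 = n - 1 by omega] at hsplit
  rw [show n - 1 + 1 = n by omega, Nat.cast_sub (by omega), Nat.cast_one, sub_add_cancel] at hlast
  have hn : (0 : ℝ) < n := by exact_mod_cast (by omega : 0 < n)
  rw [div_div, div_mul_eq_mul_div, le_div_iff₀ (by positivity)]
  have := ha 1
  have := ha (n - 1)
  nlinarith

end FactorialRatio

def ConvolutionBound (t : ℕ → ℝ) (C κ : ℝ) : Prop :=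
  ∀ n, 1 ≤ n →
    t n ≤ C + κ / (n : ℝ) ^ 2 * ∑ i ∈ Ico 1 n, t i * t (n - i) / 2 ^ min i (n - i)

lemma div_sq_mul_sum_Ico_le {κ X : ℝ} {f : ℕ → ℝ} {n : ℕ} (hκ : 0 ≤ κ) (hX : 0 ≤ X)
    (hn : 1 ≤ n) (hf : ∀ i ∈ Ico 1 n, f i ≤ X) :
    κ / (n : ℝ) ^ 2 * ∑ i ∈ Ico 1 n, f i ≤ κ * X / n := by
  have hn0 : (0 : ℝ) < n := by exact_mod_cast hn
  have hsum : ∑ i ∈ Ico 1 n, f i ≤ n * X :=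
    calc ∑ i ∈ Ico 1 n, f i ≤ #(Ico 1 n) • X := sum_le_card_nsmul _ _ _ hf
      _ ≤ n * X := by
        rw [nsmul_eq_mul, Nat.card_Ico]
        exact mul_le_mul_of_nonneg_right (by exact_mod_cast Nat.sub_le n 1) hX
  calc κ / (n : ℝ) ^ 2 * ∑ i ∈ Ico 1 n, f i ≤ κ / (n : ℝ) ^ 2 * (n * X) := by gcongr
    _ = κ * X / n := by field_simp

lemma mul_div_two_pow_le {x y B B' g r : ℝ} {i j : ℕ} (hx0 : 0 ≤ x) (hy0 : 0 ≤ y)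
    (hB : 0 ≤ B) (hg : 0 ≤ g) (hgr : g ≤ 2 * r) (hx : x ≤ B * g ^ i)
    (hy : y ≤ B' * r ^ j) :
    x * y / 2 ^ i ≤ B * B' * r ^ (i + j) := by
  have hxr : x / 2 ^ i ≤ B * r ^ i :=
    calc x / 2 ^ i ≤ B * g ^ i / 2 ^ i := by gcongr
      _ = B * (g / 2) ^ i := by rw [div_pow, mul_div_assoc]
      _ ≤ B * r ^ i := by gcongr; linarith
  calc x * y / 2 ^ i = x / 2 ^ i * y := by ring
    _ ≤ B * r ^ i * (B' * r ^ j) := mul_le_mul hxr hy hy0 (le_trans (by positivity) hxr)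
    _ = B * B' * r ^ (i + j) := by ring

namespace ConvolutionBound

variable {t : ℕ → ℝ} {C κ : ℝ}

lemma exists_geometric_bound (ht : ConvolutionBound t C κ) (ht0 : ∀ n, 0 ≤ t n) (hC : 0 ≤ C)
    (hκ : 0 ≤ κ) :
    ∃ B g : ℝ, 0 ≤ B ∧ 0 ≤ g ∧ ∀ n, 1 ≤ n → t n ≤ B * g ^ n := by
  set g := 1 + 4 * κ * C
  have hg : 1 ≤ g := by simp only [g]; nlinarith
  set B := 2 * C / g
  have hB : 0 ≤ B := by positivity
  have hκB : κ * B ≤ 1 / 2 := by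
    rw [mul_div_assoc', div_le_div_iff₀ (by positivity) (by norm_num)]
    nlinarith
  refine ⟨B, g, hB, by positivity, fun n => ?_⟩
  induction n using Nat.strong_induction_on with
  | _ n ih =>
  intro hn
  have hterm : ∀ i ∈ Ico 1 n, t i * t (n - i) / 2 ^ min i (n - i) ≤ B * B * g ^ n := by
    intro i hi
    obtain ⟨hi1, hin⟩ := mem_Ico.1 hi
    calc t i * t (n - i) / 2 ^ min i (n - i) ≤ t i * t (n - i) :=
          div_le_self (mul_nonneg (ht0 _) (ht0 _)) (one_le_pow₀ (by norm_num))
      _ ≤ B * g ^ i * (B * g ^ (n - i)) :=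
          mul_le_mul (ih i hin hi1) (ih _ (by omega) (by omega)) (ht0 _) (by positivity)
      _ = B * B * g ^ n := by rw [mul_mul_mul_comm, ← pow_add, Nat.add_sub_cancel' hin.le]
  have hn0 : (1 : ℝ) ≤ n := by exact_mod_cast hn
  have hgn : g ≤ g ^ n := le_self_pow₀ hg (by omega)
  calc t n ≤ C + κ * (B * B * g ^ n) / n := by
        linarith [ht n hn, div_sq_mul_sum_Ico_le hκ (by positivity) hn hterm]
    _ ≤ C + κ * B * (B * g ^ n) := by
        gcongr C + ?_
        rw [div_le_iff₀ (by positivity)]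
        nlinarith [show 0 ≤ κ * (B * B * g ^ n) by positivity]
    _ ≤ B * g ^ n := by
        have hCB : C = B * g / 2 := by simp only [B]; field_simp
        nlinarith [show 0 ≤ B * g ^ n by positivity]

lemma halve_growth (ht : ConvolutionBound t C κ) (ht0 : ∀ n, 0 ≤ t n) (hC : 0 ≤ C)
    (hκ : 0 ≤ κ) {B g r : ℝ} (hB : 0 ≤ B) (hg : 0 ≤ g)
    (hbound : ∀ n, 1 ≤ n → t n ≤ B * g ^ n) (hr : 1 ≤ r) (hgr : g ≤ 2 * r) :
    ∃ B', 0 ≤ B' ∧ ∀ n, 1 ≤ n → t n ≤ B' * r ^ n := by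
  set N := ⌈2 * κ * B⌉₊
  set B' := 2 * C + ∑ m ∈ range (N + 1), t m
  have hsum0 : 0 ≤ ∑ m ∈ range (N + 1), t m := sum_nonneg fun m _ => ht0 m
  have hB' : 0 ≤ B' := by positivity
  refine ⟨B', hB', fun n => ?_⟩
  induction n using Nat.strong_induction_on with
  | _ n ih =>
  intro hn
  have hrn : 1 ≤ r ^ n := one_le_pow₀ hr
  by_cases hnN : n ≤ N
  · calc t n ≤ ∑ m ∈ range (N + 1), t m :=
          single_le_sum (fun m _ => ht0 m) (mem_range.2 (by omega))
      _ ≤ B' := by linarith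
      _ ≤ B' * r ^ n := le_mul_of_one_le_right hB' hrn
  have hterm : ∀ i ∈ Ico 1 n, t i * t (n - i) / 2 ^ min i (n - i) ≤ B * B' * r ^ n := by
    intro i hi
    obtain ⟨hi1, hin⟩ := mem_Ico.1 hi
    rcases le_total i (n - i) with hmin | hmin
    · rw [min_eq_left hmin, ← Nat.add_sub_cancel' hin.le, Nat.add_sub_cancel_left]
      exact mul_div_two_pow_le (ht0 _) (ht0 _) hB hg hgr (hbound i hi1) (ih _ (by omega) (by omega))
    · rw [min_eq_right hmin, mul_comm, ← Nat.sub_add_cancel hin.le, Nat.add_sub_cancel]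
      exact mul_div_two_pow_le (ht0 _) (ht0 _) hB hg hgr (hbound _ (by omega)) (ih i hin hi1)
  have hκB : 2 * κ * B ≤ n := le_trans (Nat.le_ceil _) (by exact_mod_cast (by omega : N ≤ n))
  have hn0 : (0 : ℝ) < n := by exact_mod_cast hn
  calc t n ≤ C + κ * (B * B' * r ^ n) / n := by
        linarith [ht n hn, div_sq_mul_sum_Ico_le hκ (by positivity) hn hterm]
    _ ≤ C + B' * r ^ n / 2 := by
        gcongr C + ?_
        rw [div_le_iff₀ hn0]
        nlinarith [show 0 ≤ B' * r ^ n by positivity]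
    _ ≤ B' * r ^ n := by nlinarith

lemma exists_bound (ht : ConvolutionBound t C κ) (ht0 : ∀ n, 0 ≤ t n) (hC : 0 ≤ C)
    (hκ : 0 ≤ κ) : ∃ D, ∀ n, 1 ≤ n → t n ≤ D := by
  have key : ∀ k : ℕ, ∀ B g : ℝ, 0 ≤ B → 0 ≤ g → g ≤ 2 ^ k →
      (∀ n, 1 ≤ n → t n ≤ B * g ^ n) → ∃ D, ∀ n, 1 ≤ n → t n ≤ D := by
    intro k
    induction k with
    | zero =>
      intro B g hB hg hgk hbound
      exact ⟨B, fun n hn => (hbound n hn).trans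
        (mul_le_of_le_one_right hB (pow_le_one₀ hg (by simpa using hgk)))⟩
    | succ k ih =>
      intro B g hB hg hgk hbound
      obtain ⟨B', hB', hbound'⟩ := ht.halve_growth ht0 hC hκ hB hg hbound
        (le_max_right (g / 2) 1) (by linarith [le_max_left (g / 2) 1])
      refine ih B' _ hB' (by positivity) (max_le ?_ (one_le_pow₀ (by norm_num))) hbound'
      rw [pow_succ] at hgk
      linarith
  obtain ⟨B, g, hB, hg, hbound⟩ := ht.exists_geometric_bound ht0 hC hκ
  obtain ⟨k, hk⟩ := pow_unbounded_of_one_lt g (by norm_num : (1 : ℝ) < 2)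
  exact key k B g hB hg hk.le hbound

end ConvolutionBound

lemma sum_range_succ_mul_sub_eq {R : Type*} [CommSemiring R] (f : ℕ → R) {n : ℕ}
    (hn : 1 ≤ n) :
    ∑ i ∈ range (n + 1), f i * f (n - i) =
      2 * f 0 * f n + ∑ i ∈ Ico 1 n, f i * f (n - i) := by
  rw [sum_range_succ, range_eq_Ico, sum_eq_sum_Ico_succ_bot (by omega), Nat.sub_zero,
    Nat.sub_self]
  ring

section Normalized

variable {a v : ℕ → ℝ} {κ : ℝ}

lemma convolutionBound_div {y : ℕ → ℝ} {C : ℝ} (ha : ∀ n, 0 < a n) (hv : ∀ n, 0 ≤ v n)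
    (hvy : ∀ n, 1 ≤ n → v n ≤ y n + ∑ i ∈ Ico 1 n, v i * v (n - i))
    (hy : ∀ n, y n / a n ≤ C)
    (hmul : ∀ i n, 1 ≤ i → i < n →
      a i * a (n - i) ≤ κ / (n : ℝ) ^ 2 / 2 ^ min i (n - i) * a n) :
    ConvolutionBound (fun n => v n / a n) C κ := by
  intro n hn
  have hterm : ∀ i ∈ Ico 1 n, v i * v (n - i) / a n ≤
      κ / (n : ℝ) ^ 2 * (v i / a i * (v (n - i) / a (n - i)) / 2 ^ min i (n - i)) := by
    intro i hi
    obtain ⟨hi1, hin⟩ := mem_Ico.1 hi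
    have hai := ha i
    have hani := ha (n - i)
    have hvv : 0 ≤ v i / a i * (v (n - i) / a (n - i)) := by
      have := hv i; have := hv (n - i); positivity
    calc v i * v (n - i) / a n
        = v i / a i * (v (n - i) / a (n - i)) * (a i * a (n - i)) / a n := by field_simp
      _ ≤ v i / a i * (v (n - i) / a (n - i)) *
            (κ / (n : ℝ) ^ 2 / 2 ^ min i (n - i) * a n) / a n :=
        div_le_div_of_nonneg_right (mul_le_mul_of_nonneg_left (hmul i n hi1 hin) hvv) (ha n).le
      _ = κ / (n : ℝ) ^ 2 * (v i / a i * (v (n - i) / a (n - i)) / 2 ^ min i (n - i)) := by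
        field_simp [(ha n).ne']
  calc v n / a n ≤ (y n + ∑ i ∈ Ico 1 n, v i * v (n - i)) / a n :=
        div_le_div_of_nonneg_right (hvy n hn) (ha n).le
    _ = y n / a n + ∑ i ∈ Ico 1 n, v i * v (n - i) / a n := by rw [add_div, sum_div]
    _ ≤ C + κ / (n : ℝ) ^ 2 *
          ∑ i ∈ Ico 1 n, v i / a i * (v (n - i) / a (n - i)) / 2 ^ min i (n - i) := by
        rw [mul_sum]
        exact add_le_add (hy n) (sum_le_sum hterm)

lemma isLittleO_convolution {D : ℝ} (ha : ∀ n, 0 < a n) (hv : ∀ n, 0 ≤ v n) (hκ : 0 ≤ κ)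
    (hD : ∀ n, 1 ≤ n → v n / a n ≤ D)
    (hmul : ∀ i n, 1 ≤ i → i < n →
      a i * a (n - i) ≤ κ / (n : ℝ) ^ 2 / 2 ^ min i (n - i) * a n) :
    (fun n => ∑ i ∈ Ico 1 n, v i * v (n - i)) =o[atTop] a := by
  rw [isLittleO_iff_tendsto' (Eventually.of_forall fun n h => absurd h (ha n).ne')]
  refine squeeze_zero' (Eventually.of_forall fun n =>
    div_nonneg (sum_nonneg fun i _ => mul_nonneg (hv _) (hv _)) (ha n).le) ?_
    (tendsto_const_div_atTop_nhds_zero_nat (κ * D ^ 2))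
  filter_upwards [eventually_ge_atTop 1] with n hn
  have hvD : ∀ m, 1 ≤ m → v m ≤ D * a m := fun m hm => (div_le_iff₀ (ha m)).1 (hD m hm)
  have hterm : ∀ i ∈ Ico 1 n, v i * v (n - i) ≤ κ / (n : ℝ) ^ 2 * (D ^ 2 * a n) := by
    intro i hi
    obtain ⟨hi1, hin⟩ := mem_Ico.1 hi
    have hDa : 0 ≤ D * a i := (hv i).trans (hvD i hi1)
    calc v i * v (n - i) ≤ D * a i * (D * a (n - i)) :=
          mul_le_mul (hvD i hi1) (hvD _ (by omega)) (hv _) hDa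
      _ = D ^ 2 * (a i * a (n - i)) := by ring
      _ ≤ D ^ 2 * (κ / (n : ℝ) ^ 2 * a n) := by
          refine mul_le_mul_of_nonneg_left ((hmul i n hi1 hin).trans ?_) (sq_nonneg D)
          exact mul_le_mul_of_nonneg_right
            (div_le_self (by positivity) (one_le_pow₀ (by norm_num))) (ha n).le
      _ = κ / (n : ℝ) ^ 2 * (D ^ 2 * a n) := by ring
  have hsum : ∑ i ∈ Ico 1 n, v i * v (n - i) ≤ κ * (D ^ 2 * a n) / n :=
    ((sum_le_sum hterm).trans_eq (mul_sum _ _ _).symm).trans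
      (div_sq_mul_sum_Ico_le hκ (by have := ha n; positivity) hn fun _ _ => le_rfl)
  calc (∑ i ∈ Ico 1 n, v i * v (n - i)) / a n ≤ κ * (D ^ 2 * a n) / n / a n := by
        gcongr; exact (ha n).le
    _ = κ * D ^ 2 / n := by field_simp [(ha n).ne']

end Normalized

lemma exists_forall_div_le_of_isEquivalent {y a : ℕ → ℝ} {c : ℝ} (ha : ∀ n, a n ≠ 0)
    (h : y ~[atTop] fun n => c * a n) : ∃ C, ∀ n, y n / a n ≤ C := by
  have hlim : Tendsto (fun n => y n / a n) atTop (nhds c) :=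
    (h.div (IsEquivalent.refl (u := a))).symm.tendsto_nhds <|
      tendsto_const_nhds.congr fun n => (mul_div_cancel_right₀ c (ha n)).symm
  obtain ⟨C, hC⟩ := hlim.bddAbove_range
  exact ⟨C, fun n => hC ⟨n, rfl⟩⟩

lemma isEquivalent_div_of_mul_eq_add_isLittleO {y v r : ℕ → ℝ} {k b b' : ℝ} (hk : 0 < k)
    (hr : r =o[atTop] y) (h : ∀ᶠ n in atTop, (k * n - b) * v n = y n + r n) :
    v ~[atTop] fun n => y n / (k * n - b') := by
  have hlin : Tendsto (fun n : ℕ => k * n - b') atTop atTop :=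
    tendsto_atTop_add_const_right _ _ (tendsto_natCast_atTop_atTop.const_mul_atTop hk)
  have hden : (fun n : ℕ => k * n - b) ~[atTop] fun n => k * n - b' :=
    (IsEquivalent.refl.add_isLittleO ((isLittleO_const_left (c := b' - b)).2
      (Or.inr (tendsto_norm_atTop_atTop.comp hlin)))).congr_left
      (Eventually.of_forall fun n => by simp only [Pi.add_apply]; ring)
  refine ((IsEquivalent.refl.add_isLittleO hr).div hden).congr_left ?_
  filter_upwards [h, (tendsto_atTop_add_const_right _ (b' - b) hlin).eventually_gt_atTop 0]
    with n hn hpos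
  rw [Pi.div_apply, Pi.add_apply, div_eq_iff (by linarith), ← hn]
  ring
end RapidGrowth

open RapidGrowth in
theorem rapid_growth_quadratic_relation_general (K : ℕ) (hK : 3 ≤ K) (y v : ℕ → ℝ)
    (hy : ∀ n, 0 < y n) (hv : ∀ n, 0 < v n)
    (hrel : ∀ n : ℕ,
      y n = ((K : ℝ) * n + 1) * v n - ∑ i ∈ Finset.range (n + 1), v i * v (n - i))
    (c : ℝ) (hc : 0 < c)
    (hasym : Asymptotics.IsEquivalent Filter.atTop y
      (fun n : ℕ => c * ((K * n + 1)! : ℝ) / ((K : ℝ) ^ n * (n ! : ℝ)))) :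
    Asymptotics.IsEquivalent Filter.atTop v (fun n : ℕ => y n / ((K : ℝ) * n - 1)) := by
  set a := factorialRatio K
  set conv : ℕ → ℝ := fun n => ∑ i ∈ Ico 1 n, v i * v (n - i)
  have ha : ∀ n, 0 < a n := factorialRatio_pos (by omega)
  have hv0 : v 0 < 1 := by
    have := hrel 0
    simp only [CharP.cast_eq_zero, mul_zero, zero_add, one_mul, sum_range_one] at this
    nlinarith [hy 0, hv 0]
  have hsplit : ∀ n, 1 ≤ n → ((K : ℝ) * n - (2 * v 0 - 1)) * v n = y n + conv n :=
    fun n hn => by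
      rw [hrel n, sum_range_succ_mul_sub_eq v hn]
      ring
  have hya : y ~[atTop] fun n => c * a n :=
    hasym.congr_right (Eventually.of_forall fun n => mul_div_assoc _ _ _)
  obtain ⟨C, hC⟩ := exists_forall_div_le_of_isEquivalent (fun n => (ha n).ne') hya
  have hmul := fun i n (hi : 1 ≤ i) (hin : i < n) => factorialRatio_mul_le hK hi hin
  have hκ : 0 ≤ 4 * a 1 := by linarith [ha 1]
  have hvy : ∀ n, 1 ≤ n → v n ≤ y n + conv n := fun n hn => by
    have : (3 : ℝ) ≤ K * n := by exact_mod_cast (by nlinarith : 3 ≤ K * n)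
    nlinarith [hsplit n hn, hv n]
  obtain ⟨D, hD⟩ := (convolutionBound_div ha (fun n => (hv n).le) hvy hC hmul).exists_bound
    (fun n => (div_pos (hv n) (ha n)).le) ((div_pos (hy 0) (ha 0)).le.trans (hC 0)) hκ
  have hconv : conv =o[atTop] y :=
    ((isLittleO_convolution ha (fun n => (hv n).le) hκ hD hmul).const_mul_right'
      (isUnit_iff_ne_zero.2 hc.ne')).trans_isBigO hya.isBigO_symm
  exact isEquivalent_div_of_mul_eq_add_isLittleO (by positivity) hconv
    (eventually_ge_atTop 1 |>.mono hsplit)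

/-- If `y_n = (Kn+1) v_n - Σ_{n1+n2=n} v_{n1} v_{n2}` with `y_n ~ c (Kn+1)!/(K^n n!)`
and `v_n/v_{n-1} → ∞`, then `v_n ~ y_n/(Kn-1)`. -/
theorem rapid_growth_quadratic_relation (K : ℕ) (hK : 3 ≤ K) (y v : ℕ → ℝ)
    (hy : ∀ n, 0 < y n) (hv : ∀ n, 0 < v n)
    (hrel : ∀ n : ℕ,
      y n = ((K : ℝ) * n + 1) * v n - ∑ i ∈ Finset.range (n + 1), v i * v (n - i))
    (c : ℝ) (hc : 0 < c)
    (hasym : Asymptotics.IsEquivalent Filter.atTop y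
      (fun n : ℕ => c * ((K * n + 1)! : ℝ) / ((K : ℝ) ^ n * (n ! : ℝ))))
    (hratio : Filter.Tendsto (fun n : ℕ => v (n + 1) / v n) Filter.atTop Filter.atTop) :
    Asymptotics.IsEquivalent Filter.atTop v (fun n : ℕ => y n / ((K : ℝ) * n - 1)) :=
  rapid_growth_quadratic_relation_general K hK y v hy hv hrel c hc hasym
end
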